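/- arXiv:0910.0281 — 11 statements merged into one kernel-verified Lean document; each statement's English description precedes it below -/
import Mathlib

section
/- There exist a finite set R, partitions π, π' of R, and a subset K ⊆ R such that rc_K^π + rc_K^{π'} < rc_K^{π∨π'} + rc_K^{π∧π'}. Concretely, with R = {1,2,3,4}, π = {{1,2},{3,4}}, π' = {{1,3},{2,4}}, and K = R, one has rc_K^π + rc_K^{π'} = 2 while rc_K^{π∨π'} + rc_K^{π∧π'} = 3. -/
/-!
On `R = α × β` the two coordinate partitions have the one-part partition as join and the
discrete partition as meet. Taking `K = R`, the left-hand side is `(|α| - 1) + (|β| - 1)` and the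
right-hand side is `|α| |β| - 1`, which is larger as soon as `|α|, |β| ≥ 2`; `α = β = Bool` gives
`2 < 3`.
-/

open Classical

namespace SteinerLP

variable {R : Type*}

/-- Number of parts of a partition (setoid). -/
noncomputable def nparts (s : Setoid R) : ℕ := Nat.card (Quotient s)

/-- Rank contribution of a hyperedge `K` to partition `s`:
the number of parts of `s` met by `K`, minus 1. -/
noncomputable def rc (s : Setoid R) (K : Set R) : ℕ := (Quotient.mk s '' K).ncard - 1

/-- The rank `ρ(X) = max (0, |X| - 1)` of a set. -/
noncomputable def rho (K : Set R) : ℕ := K.ncard - 1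

/-- The part of the partition `s` corresponding to a class `c`. -/
def classOf (s : Setoid R) (c : Quotient s) : Set R := {x | Quotient.mk s x = c}

/-- The merged partition `m(s, S)`: all parts of `s` meeting `S` are merged into one part. -/
def merge (s : Setoid R) (S : Set R) : Setoid R where
  r x y := s.r x y ∨ ((∃ a ∈ S, s.r x a) ∧ (∃ b ∈ S, s.r y b))
  iseqv := by
    constructor
    · intro x; exact Or.inl (s.iseqv.refl x)
    · intro x y h
      rcases h with h | ⟨ha, hb⟩
      · exact Or.inl (s.iseqv.symm h)
      · exact Or.inr ⟨hb, ha⟩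
    · intro x y z hxy hyz
      rcases hxy with hxy | ⟨hx, hy⟩
      · rcases hyz with hyz | ⟨hy, hz⟩
        · exact Or.inl (s.iseqv.trans hxy hyz)
        · refine Or.inr ⟨?_, hz⟩
          rcases hy with ⟨a, haS, hya⟩
          exact ⟨a, haS, s.iseqv.trans hxy hya⟩
      · rcases hyz with hyz | ⟨hy', hz⟩
        · refine Or.inr ⟨hx, ?_⟩
          rcases hy with ⟨b, hbS, hyb⟩
          exact ⟨b, hbS, s.iseqv.trans (s.iseqv.symm hyz) hyb⟩
        · exact Or.inr ⟨hx, hz⟩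

end SteinerLP

namespace SteinerLP

variable {α β : Type*}

lemma rc_univ (s : Setoid R) : rc s Set.univ = Nat.card (Quotient s) - 1 := by
  rw [rc, Set.image_univ, Set.range_eq_univ.mpr Quotient.mk_surjective, Set.ncard_univ]

lemma rc_top_univ : rc (⊤ : Setoid R) Set.univ = 0 := by
  have : Subsingleton (Quotient (⊤ : Setoid R)) :=
    ⟨Quotient.ind₂ fun _ _ => Quotient.sound trivial⟩
  exact Nat.sub_eq_zero_of_le (Set.ncard_le_one_of_subsingleton _)

lemma rc_bot_univ : rc (⊥ : Setoid R) Set.univ = Nat.card R - 1 := by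
  rw [rc_univ, Nat.card_congr Setoid.quotientBotEquiv]

lemma rc_ker_univ {f : R → α} (hf : Function.Surjective f) :
    rc (Setoid.ker f) Set.univ = Nat.card α - 1 := by
  rw [rc_univ, Nat.card_congr (Setoid.quotientKerEquivOfSurjective f hf)]

lemma ker_fst_sup_ker_snd : Setoid.ker (Prod.fst : α × β → α) ⊔ Setoid.ker Prod.snd = ⊤ :=
  Setoid.eq_top_iff.mpr fun x y =>
    (Setoid.ker Prod.fst ⊔ Setoid.ker Prod.snd).iseqv.trans
      (le_sup_left (a := Setoid.ker Prod.fst) (b := Setoid.ker Prod.snd) (y := (x.1, y.2)) rfl)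
      (le_sup_right (a := Setoid.ker Prod.fst) (b := Setoid.ker Prod.snd) (x := (x.1, y.2)) rfl)

lemma ker_fst_inf_ker_snd : Setoid.ker (Prod.fst : α × β → α) ⊓ Setoid.ker Prod.snd = ⊥ :=
  Setoid.ext fun _ _ => Prod.ext_iff.symm

end SteinerLP

open SteinerLP in
/-- the rank contribution is not submodular: there are a finite set `R`,
partitions `π, π'` of `R` and a (nonempty) subset `K ⊆ R` with
`rc_K^π + rc_K^{π'} = 2 < 3 = rc_K^{π∨π'} + rc_K^{π∧π'}`. -/
theorem exists_rc_not_submodular :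
    ∃ (R : Type) (_ : Fintype R) (π π' : Setoid R) (K : Set R), K.Nonempty ∧
      rc π K + rc π' K = 2 ∧ rc (π ⊔ π') K + rc (π ⊓ π') K = 3 ∧
      rc π K + rc π' K < rc (π ⊔ π') K + rc (π ⊓ π') K := by
  refine ⟨Bool × Bool, inferInstance, Setoid.ker Prod.fst, Setoid.ker Prod.snd, Set.univ,
    Set.univ_nonempty, ?_⟩
  simp only [ker_fst_sup_ker_snd, ker_fst_inf_ker_snd, rc_top_univ, rc_bot_univ,
    rc_ker_univ Prod.fst_surjective, rc_ker_univ Prod.snd_surjective, Nat.card_eq_fintype_card,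
    Fintype.card_prod, Fintype.card_bool]
  decide
end

section
/- Let π, π' be partitions of a finite set R, with parts of π being π₁, ..., π_{r(π)}. Then r(π)·[r(π')-1] + [r(π)-1] = [r(π∧π') - 1] + Σ_{i=1}^{r(π)} [r(m(π', π_i)) - 1], where m(π', S) is the partition obtained from π' by merging all parts of π' that intersect S. -/
open Classical

namespace SteinerLPAux

open SteinerLP

variable {R : Type*} [Fintype R]

/-- Cardinality of the meet quotient. -/
lemma card_meet (π π' : Setoid R) :
    Nat.card (Quotient (π ⊓ π')) =
      ∑ᶠ c : Quotient π, (Quotient.mk π' '' classOf π c).ncard := by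
  haveI : Fintype (Quotient π) := Fintype.ofFinite _
  haveI : Fintype (Quotient π') := Fintype.ofFinite _
  haveI : Fintype (Quotient (π ⊓ π')) := Fintype.ofFinite _
  -- bijection from a sigma type
  let F : (Σ a : Quotient π, ↥(Quotient.mk π' '' classOf π a)) → Quotient (π ⊓ π') :=
    fun p => Quotient.mk _ (Classical.choose p.2.2)
  have hF : Function.Bijective F := by
    constructor
    · rintro ⟨a, b, hb⟩ ⟨a', b', hb'⟩ h
      obtain ⟨hx1, hx2⟩ := Classical.choose_spec hb
      obtain ⟨hy1, hy2⟩ := Classical.choose_spec hb'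
      have h2 := Quotient.exact h
      have h3 : π (Classical.choose hb) (Classical.choose hb') ∧
          π' (Classical.choose hb) (Classical.choose hb') :=
        Setoid.inf_iff_and.mp h2
      have ha : a = a' := by
        rw [← hx1, ← hy1]; exact Quotient.sound h3.1
      have hbb : b = b' := by
        rw [← hx2, ← hy2]; exact Quotient.sound h3.2
      subst ha; subst hbb; rfl
    · intro q
      obtain ⟨x, rfl⟩ := Quotient.exists_rep q
      refine ⟨⟨Quotient.mk π x, Quotient.mk π' x, ⟨x, rfl, rfl⟩⟩, ?_⟩
      have hspec := Classical.choose_spec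
        (⟨x, rfl, rfl⟩ : ∃ y ∈ classOf π (Quotient.mk π x), Quotient.mk π' y = Quotient.mk π' x)
      obtain ⟨h1, h2⟩ := hspec
      refine Quotient.sound (Setoid.inf_iff_and.mpr ⟨Quotient.exact h1, Quotient.exact h2⟩)
  have hcard := Nat.card_eq_of_bijective F hF
  rw [← hcard, Nat.card_eq_fintype_card, Fintype.card_sigma,
    finsum_eq_sum_of_fintype]
  congr 1
  ext a
  rw [← Nat.card_coe_set_eq, Nat.card_eq_fintype_card]

/-- Cardinality of the merged quotient. -/
lemma card_merge (π' : Setoid R) (S : Set R) (hS : S.Nonempty) :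
    Nat.card (Quotient (merge π' S)) =
      Nat.card (Quotient π') - (Quotient.mk π' '' S).ncard + 1 := by
  haveI : Fintype (Quotient π') := Fintype.ofFinite _
  set T : Set (Quotient π') := Quotient.mk π' '' S with hT
  obtain ⟨s0, hs0⟩ := hS
  set t0 : Quotient π' := Quotient.mk π' s0 with ht0
  have ht0T : t0 ∈ T := ⟨s0, hs0, rfl⟩
  -- the natural surjection
  let g : Quotient π' → Quotient (merge π' S) :=
    Quotient.lift (Quotient.mk (merge π' S)) (fun x y h => Quotient.sound (Or.inl h))
  have hmemT : ∀ x : R, (Quotient.mk π' x ∈ T ↔ ∃ a ∈ S, π' x a) := by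
    intro x
    constructor
    · rintro ⟨a, haS, ha⟩
      exact ⟨a, haS, Setoid.symm (Quotient.exact ha)⟩
    · rintro ⟨a, haS, ha⟩
      exact ⟨a, haS, Quotient.sound (Setoid.symm ha)⟩
  have hg : ∀ b b' : Quotient π', (g b = g b' ↔ b = b' ∨ (b ∈ T ∧ b' ∈ T)) := by
    intro b b'
    induction b using Quotient.ind with
    | _ x =>
    induction b' using Quotient.ind with
    | _ y =>
    constructor
    · intro h
      have h2 := Quotient.exact h
      rcases h2 with h2 | ⟨hx, hy⟩
      · exact Or.inl (Quotient.sound h2)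
      · exact Or.inr ⟨(hmemT x).mpr hx, (hmemT y).mpr hy⟩
    · rintro (h | ⟨hx, hy⟩)
      · have := Quotient.exact h
        exact Quotient.sound (Or.inl this)
      · exact Quotient.sound (Or.inr ⟨(hmemT x).mp hx, (hmemT y).mp hy⟩)
  -- restricted bijection
  let U : Set (Quotient π') := Tᶜ ∪ {t0}
  let G : ↥U → Quotient (merge π' S) := fun u => g u.1
  have hG : Function.Bijective G := by
    constructor
    · rintro ⟨b, hb⟩ ⟨b', hb'⟩ h
      have h2 := (hg b b').mp h
      rcases h2 with h2 | ⟨hbT, hb'T⟩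
      · exact Subtype.ext h2
      · have hb1 : b = t0 := by
          rcases hb with hb | hb
          · exact absurd hbT hb
          · exact hb
        have hb2 : b' = t0 := by
          rcases hb' with hb' | hb'
          · exact absurd hb'T hb'
          · exact hb'
        exact Subtype.ext (hb1.trans hb2.symm)
    · intro q
      obtain ⟨x, rfl⟩ := Quotient.exists_rep q
      by_cases hx : Quotient.mk π' x ∈ T
      · refine ⟨⟨t0, Or.inr rfl⟩, ?_⟩
        exact (hg t0 (Quotient.mk π' x)).mpr (Or.inr ⟨ht0T, hx⟩)
      · exact ⟨⟨Quotient.mk π' x, Or.inl hx⟩, rfl⟩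
  have hcard := Nat.card_eq_of_bijective G hG
  have hU : U.ncard = Nat.card (Quotient π') - T.ncard + 1 := by
    have h1 : U = insert t0 Tᶜ := Set.union_singleton
    have h2 : t0 ∉ Tᶜ := fun h => h ht0T
    have h3 : Tᶜ.ncard = Nat.card (Quotient π') - T.ncard := by
      have := Set.ncard_add_ncard_compl T (Set.toFinite _) (Set.toFinite _)
      omega
    rw [h1, Set.ncard_insert_of_notMem h2 (Set.toFinite _), h3]
  rw [← hcard, Nat.card_coe_set_eq, hU]

end SteinerLPAux

open SteinerLP in
/-- for partitions `π, π'` of a finite nonempty set `R`,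
`r(π)·[r(π')-1] + [r(π)-1] = [r(π∧π') - 1] + Σ_{parts p of π} [r(m(π', p)) - 1]`. -/
theorem partition_uncrossing_rank_identity {R : Type*} [Fintype R] [Nonempty R]
    (π π' : Setoid R) :
    nparts π * (nparts π' - 1) + (nparts π - 1) =
      (nparts (π ⊓ π') - 1) + ∑ᶠ c : Quotient π, (nparts (merge π' (classOf π c)) - 1) := by
  classical
  haveI : Fintype (Quotient π) := Fintype.ofFinite _
  set r : ℕ := nparts π with hr
  set r' : ℕ := nparts π' with hr'
  set n : Quotient π → ℕ := fun c => (Quotient.mk π' '' classOf π c).ncard with hn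
  have hclass_ne : ∀ c : Quotient π, (classOf π c).Nonempty := by
    intro c
    obtain ⟨x, rfl⟩ := Quotient.exists_rep c
    exact ⟨x, rfl⟩
  have hn1 : ∀ c, 1 ≤ n c := by
    intro c
    have : (Quotient.mk π' '' classOf π c).Nonempty := (hclass_ne c).image _
    exact (Set.ncard_pos (Set.toFinite _)).mpr this
  have hnle : ∀ c, n c ≤ r' := by
    intro c
    have h := Set.ncard_le_ncard (Set.subset_univ (Quotient.mk π' '' classOf π c))
      (Set.toFinite _)
    rwa [Set.ncard_univ] at h
  haveI : Nonempty (Quotient π) := ⟨Quotient.mk π (Classical.arbitrary R)⟩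
  haveI : Nonempty (Quotient π') := ⟨Quotient.mk π' (Classical.arbitrary R)⟩
  have hr1 : 1 ≤ r := Nat.card_pos
  have hr'1 : 1 ≤ r' := Nat.card_pos
  -- meet cardinality
  have hmeet : nparts (π ⊓ π') = ∑ c : Quotient π, n c := by
    rw [nparts, SteinerLPAux.card_meet, finsum_eq_sum_of_fintype]
  -- merge cardinality
  have hmerge : ∀ c : Quotient π, nparts (merge π' (classOf π c)) = r' - n c + 1 := by
    intro c
    rw [nparts, SteinerLPAux.card_merge π' _ (hclass_ne c)]
    rfl
  rw [finsum_eq_sum_of_fintype, hmeet]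
  have hsum_eq : ∑ c : Quotient π, (nparts (merge π' (classOf π c)) - 1)
      = ∑ c : Quotient π, (r' - n c) := by
    refine Finset.sum_congr rfl fun c _ => ?_
    rw [hmerge c]; omega
  rw [hsum_eq]
  have hsumid : (∑ c : Quotient π, (r' - n c)) + (∑ c : Quotient π, n c) = r * r' := by
    rw [← Finset.sum_add_distrib]
    have : ∀ c : Quotient π, (r' - n c) + n c = r' := fun c => Nat.sub_add_cancel (hnle c)
    rw [Finset.sum_congr rfl fun c _ => this c, Finset.sum_const, Finset.card_univ,
      smul_eq_mul, hr, nparts, Nat.card_eq_fintype_card]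
  have hsumge : r ≤ ∑ c : Quotient π, n c := by
    calc r = ∑ _c : Quotient π, 1 := by
            rw [Finset.sum_const, Finset.card_univ, smul_eq_mul, mul_one, hr, nparts,
              Nat.card_eq_fintype_card]
      _ ≤ ∑ c : Quotient π, n c := Finset.sum_le_sum fun c _ => hn1 c
  set A := ∑ c : Quotient π, n c with hA
  set B := ∑ c : Quotient π, (r' - n c) with hB
  set q := r * (r' - 1) with hq
  have hqP : q + r = r * r' := by
    conv_rhs => rw [← Nat.succ_pred_eq_of_pos hr'1]
    rw [hq, Nat.mul_succ]
    rfl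
  omega
end

section
/- Let π, π' be partitions of a finite set R with parts of π being π₁, ..., π_{r(π)}, and let K ⊆ R be nonempty. Then r(π)·rc_K^{π'} + rc_K^π ≥ rc_K^{π∧π'} + Σ_{i=1}^{r(π)} rc_K^{m(π', π_i)}. -/
open Classical

private lemma ncard_biUnion_le' {α ι : Type*} [Finite α] (s : Finset ι) (f : ι → Set α) :
    (⋃ i ∈ s, f i).ncard ≤ ∑ i ∈ s, (f i).ncard := by
  classical
  induction s using Finset.induction_on with
  | empty => simp
  | @insert j t hj ih =>
    rw [Finset.sum_insert hj]
    have hsub : (⋃ i ∈ insert j t, f i) ⊆ f j ∪ ⋃ i ∈ t, f i := by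
      intro x hx
      simp only [Set.mem_iUnion] at hx ⊢
      obtain ⟨i, hi, hxi⟩ := hx
      rcases Finset.mem_insert.mp hi with rfl | hi
      · exact Or.inl hxi
      · exact Or.inr (Set.mem_iUnion₂.mpr ⟨i, hi, hxi⟩)
    calc (⋃ i ∈ insert j t, f i).ncard ≤ (f j ∪ ⋃ i ∈ t, f i).ncard :=
          Set.ncard_le_ncard hsub (Set.toFinite _)
      _ ≤ (f j).ncard + (⋃ i ∈ t, f i).ncard := Set.ncard_union_le _ _
      _ ≤ (f j).ncard + ∑ i ∈ t, (f i).ncard := by omega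

open SteinerLP in
/-- for partitions `π, π'` of a finite set `R` and nonempty `K ⊆ R`,
`r(π)·rc_K^{π'} + rc_K^π ≥ rc_K^{π∧π'} + Σ_{parts p of π} rc_K^{m(π', p)}`. -/
theorem partition_uncrossing_rc_inequality {R : Type*} [Fintype R]
    (π π' : Setoid R) (K : Set R) (hK : K.Nonempty) :
    rc (π ⊓ π') K + ∑ᶠ c : Quotient π, rc (merge π' (classOf π c)) K ≤
      nparts π * rc π' K + rc π K := by

  classical
  have instF : Fintype (Quotient π) := Fintype.ofFinite _
  set r : ℕ := nparts π with hr
  -- basic quantities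
  set A : Set (Quotient π') := Quotient.mk π' '' K with hA
  have hAfin : A.Finite := Set.toFinite _
  set a : ℕ := A.ncard with ha
  set t : ℕ := (Quotient.mk (π ⊓ π') '' K).ncard with ht
  set b : ℕ := (Quotient.mk π '' K).ncard with hb
  have hrcount : r = (Finset.univ : Finset (Quotient π)).card := by
    rw [hr]; simp [nparts, Nat.card_eq_fintype_card]
  -- per-class quantities
  set m : Quotient π → ℕ := fun c => (Quotient.mk (merge π' (classOf π c)) '' K).ncard with hm
  set e : Quotient π → ℕ := fun c => (Quotient.mk π' '' (K ∩ classOf π c)).ncard with he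
  -- positivity
  have ht1 : 1 ≤ t := by
    rw [ht]
    exact (Set.ncard_pos (Set.toFinite _)).mpr (hK.image _)
  have ha1 : 1 ≤ a := by
    rw [ha, hA]
    exact (Set.ncard_pos (Set.toFinite _)).mpr (hK.image _)
  have hb1 : 1 ≤ b := by
    rw [hb]
    exact (Set.ncard_pos (Set.toFinite _)).mpr (hK.image _)
  have hm1 : ∀ c, 1 ≤ m c := by
    intro c
    exact (Set.ncard_pos (Set.toFinite _)).mpr (hK.image _)
  -- Step 1 : t ≤ ∑ c, e c
  have hstep1 : t ≤ ∑ c, e c := by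
    have hcover : Quotient.mk (π ⊓ π') '' K ⊆
        ⋃ c ∈ (Finset.univ : Finset (Quotient π)), Quotient.mk (π ⊓ π') '' (K ∩ classOf π c) := by
      rintro q ⟨x, hx, rfl⟩
      exact Set.mem_iUnion₂.mpr ⟨Quotient.mk π x, Finset.mem_univ _,
        ⟨x, ⟨hx, rfl⟩, rfl⟩⟩
    have h1 : t ≤ ∑ c, (Quotient.mk (π ⊓ π') '' (K ∩ classOf π c)).ncard :=
      le_trans (Set.ncard_le_ncard hcover (Set.toFinite _)) (ncard_biUnion_le' _ _)
    refine le_trans h1 (le_of_eq (Finset.sum_congr rfl fun c _ => ?_))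
    -- ncard (mk (π⊓π') '' (K ∩ class c)) = e c
    have hinj : Set.InjOn (fun q : Quotient (π ⊓ π') =>
        Quotient.lift (Quotient.mk π') (fun x y h => Quotient.sound ((Setoid.inf_iff_and.mp h).2)) q)
        (Quotient.mk (π ⊓ π') '' (K ∩ classOf π c)) := by
      rintro u ⟨x, hx, rfl⟩ v ⟨y, hy, rfl⟩ huv
      simp only [Quotient.lift_mk] at huv
      have hxy' : π'.r x y := Quotient.exact huv
      have hxy : π.r x y := by
        have hx2 : Quotient.mk π x = c := hx.2
        have hy2 : Quotient.mk π y = c := hy.2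
        exact Quotient.exact (hx2.trans hy2.symm)
      exact Quotient.sound (Setoid.inf_iff_and.mpr ⟨hxy, hxy'⟩)
    have himg : (fun q : Quotient (π ⊓ π') =>
        Quotient.lift (Quotient.mk π') (fun x y h => Quotient.sound ((Setoid.inf_iff_and.mp h).2)) q) ''
        (Quotient.mk (π ⊓ π') '' (K ∩ classOf π c)) = Quotient.mk π' '' (K ∩ classOf π c) := by
      rw [← Set.image_comp]
      rfl
    calc (Quotient.mk (π ⊓ π') '' (K ∩ classOf π c)).ncard
        = (Quotient.mk π' '' (K ∩ classOf π c)).ncard := by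
          rw [← himg, Set.ncard_image_of_injOn hinj]
      _ = e c := rfl
  -- Step 2 : per-class inequality  e c + m c ≤ a + ind c
  set ind : Quotient π → ℕ := fun c => if (K ∩ classOf π c).Nonempty then 1 else 0 with hind
  have hstep2 : ∀ c, e c + m c ≤ a + ind c := by
    intro c
    set S : Set R := classOf π c with hS
    set D : Set (Quotient π') := {q | ∃ x ∈ S, Quotient.mk π' x = q} with hD
    -- the lift map to the merged quotient
    have hle : ∀ x y, π'.r x y → (merge π' S).r x y := fun x y h => Or.inl h
    set ψ : Quotient π' → Quotient (merge π' S) :=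
      Quotient.lift (Quotient.mk (merge π' S)) (fun x y h => Quotient.sound (hle x y h)) with hψ
    have himgψ : Quotient.mk (merge π' S) '' K = ψ '' A := by
      rw [hA, ← Set.image_comp]; rfl
    -- ψ is injective on A \ D
    have hinjψ : Set.InjOn ψ (A \ D) := by
      rintro u ⟨⟨x, hx, rfl⟩, hu⟩ v ⟨⟨y, hy, rfl⟩, hv⟩ huv
      have : (merge π' S).r x y := Quotient.exact huv
      rcases this with h | ⟨⟨p, hp, hxp⟩, _⟩
      · exact Quotient.sound h
      · exact absurd ⟨p, hp, Quotient.sound (π'.iseqv.symm hxp)⟩ hu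
    -- ψ maps A ∩ D into a single point set
    have hone : (ψ '' (A ∩ D)).ncard ≤ 1 := by
      rcases Set.eq_empty_or_nonempty (A ∩ D) with hempty | ⟨q0, hq0⟩
      · simp [hempty]
      · have : ψ '' (A ∩ D) ⊆ {ψ q0} := by
          rintro z ⟨q, hq, rfl⟩
          obtain ⟨x, rfl⟩ := Quotient.exists_rep q
          obtain ⟨y, rfl⟩ := Quotient.exists_rep q0
          obtain ⟨p, hp, hxp⟩ := hq.2
          obtain ⟨p', hp', hyp'⟩ := hq0.2
          have : (merge π' S).r x y :=
            Or.inr ⟨⟨p, hp, Quotient.exact hxp.symm⟩, ⟨p', hp', Quotient.exact hyp'.symm⟩⟩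
          simpa [hψ] using Quotient.sound this
        calc (ψ '' (A ∩ D)).ncard ≤ ({ψ q0} : Set _).ncard :=
              Set.ncard_le_ncard this (Set.toFinite _)
          _ = 1 := Set.ncard_singleton _
    -- m c ≤ (A \ D).ncard + (A ∩ D → 1)
    have hmc : m c ≤ (A \ D).ncard + (ψ '' (A ∩ D)).ncard := by
      have hsplit : ψ '' A ⊆ ψ '' (A \ D) ∪ ψ '' (A ∩ D) := by
        rintro z ⟨q, hq, rfl⟩
        by_cases hqD : q ∈ D
        · exact Or.inr ⟨q, ⟨hq, hqD⟩, rfl⟩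
        · exact Or.inl ⟨q, ⟨hq, hqD⟩, rfl⟩
      calc m c = (ψ '' A).ncard := by rw [hm]; simp only; rw [himgψ]
        _ ≤ (ψ '' (A \ D) ∪ ψ '' (A ∩ D)).ncard := Set.ncard_le_ncard hsplit (Set.toFinite _)
        _ ≤ (ψ '' (A \ D)).ncard + (ψ '' (A ∩ D)).ncard := Set.ncard_union_le _ _
        _ = (A \ D).ncard + (ψ '' (A ∩ D)).ncard := by rw [Set.ncard_image_of_injOn hinjψ]
    -- e c ≤ (A ∩ D).ncard
    have hEsub : Quotient.mk π' '' (K ∩ S) ⊆ A ∩ D := by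
      rintro q ⟨x, ⟨hxK, hxS⟩, rfl⟩
      exact ⟨⟨x, hxK, rfl⟩, ⟨x, hxS, rfl⟩⟩
    have hec : e c ≤ (A ∩ D).ncard := Set.ncard_le_ncard hEsub (Set.toFinite _)
    have hsum : (A ∩ D).ncard + (A \ D).ncard = a := by
      rw [ha]; exact Set.ncard_inter_add_ncard_diff_eq_ncard A D (Set.toFinite _)
    by_cases hne : (K ∩ S).Nonempty
    · have hind1 : ind c = 1 := by rw [hind]; simp [hS.symm ▸ hne]
      have : e c + m c ≤ (A ∩ D).ncard + ((A \ D).ncard + 1) := by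
        have := hmc; have := hone; omega
      omega
    · have hind0 : ind c = 0 := by rw [hind]; simp only; rw [if_neg (by rw [← hS]; exact hne)]
      have he0 : e c = 0 := by
        rw [he]; simp only
        rw [← hS, Set.not_nonempty_iff_eq_empty.mp hne]
        simp
      have hADle : (ψ '' (A ∩ D)).ncard ≤ (A ∩ D).ncard :=
        Set.ncard_image_le (Set.toFinite _)
      omega
  -- Step 3 : ∑ ind = b
  have hstep3 : ∑ c, ind c = b := by
    rw [hind, hb]
    have : Quotient.mk π '' K = {c | (K ∩ classOf π c).Nonempty} := by
      ext c
      constructor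
      · rintro ⟨x, hx, rfl⟩; exact ⟨x, hx, rfl⟩
      · rintro ⟨x, hxK, hxc⟩; exact ⟨x, hxK, hxc⟩
    rw [this]
    simp only
    rw [← Finset.card_filter]
    rw [← Set.ncard_coe_finset]
    congr 1
    ext c
    simp
  -- put everything together
  have hmain : t + ∑ c, m c ≤ r * a + b := by
    calc t + ∑ c, m c ≤ ∑ c, e c + ∑ c, m c := by omega
      _ = ∑ c, (e c + m c) := (Finset.sum_add_distrib).symm
      _ ≤ ∑ c, (a + ind c) := Finset.sum_le_sum fun c _ => hstep2 c
      _ = ∑ c, a + ∑ c, ind c := Finset.sum_add_distrib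
      _ = r * a + b := by rw [hstep3, Finset.sum_const, smul_eq_mul, hrcount, mul_comm]
  -- rewrite goal in terms of t, m, a, b, r
  have hgoal : rc (π ⊓ π') K + ∑ᶠ c : Quotient π, rc (merge π' (classOf π c)) K
      = (t - 1) + ∑ c, (m c - 1) := by
    rw [finsum_eq_sum_of_fintype]
    rfl
  rw [hgoal]
  have hrc' : nparts π * rc π' K + rc π K = r * (a - 1) + (b - 1) := rfl
  rw [hrc']
  have hsm : ∑ c, (m c - 1) + r = ∑ c, m c := by
    have h1 : ∑ c, ((m c - 1) + 1) = ∑ c, m c :=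
      Finset.sum_congr rfl fun c _ => by have := hm1 c; omega
    rw [← h1, Finset.sum_add_distrib, Finset.sum_const, smul_eq_mul, mul_one, hrcount]
  have hra : r * (a - 1) + r = r * a := by
    have : a - 1 + 1 = a := by omega
    calc r * (a - 1) + r = r * (a - 1 + 1) := by ring
      _ = r * a := by rw [this]
  omega
end

section
/- Suppose x : 𝒦 → ℝ≥0 is a feasible solution to the partition LP (i.e., Σ_K x_K · rc_K^π ≥ r(π) - 1 for every partition π of R), and π, π' are two partitions that are tight for x (i.e., the corresponding constraints hold with equality). Then the meet π ∧ π' and the join π ∨ π' are also tight for x. -/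
open Classical

/-!
Everything rests on one uncrossing step. Let `σ` and `p` be tight and `c` a class of `p`.
Merging the classes of `σ` that meet `c` and splitting `c` along `σ` keeps the total number of
parts, while no hyperedge meets more parts of the new pair than of the old one; feasibility of the
new pair then forces both new partitions to be tight. Repeated merging climbs from `σ` to
`σ ⊔ p`, repeated splitting descends from `σ` to `σ ⊓ p`, and the partition lattice is
finite.
-/

namespace SteinerLP

open Set

variable {R : Type*}

theorem _root_.Set.ncard_image_eq_ncard_image {α β γ : Type*} {f : α → β} {g : α → γ}
    {S : Set α} (h : ∀ a ∈ S, ∀ b ∈ S, f a = f b ↔ g a = g b) :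
    (f '' S).ncard = (g '' S).ncard := by
  -- both images are injective projections of the image of `a ↦ (f a, g a)`
  have hfst : InjOn Prod.fst ((fun a => (f a, g a)) '' S) := by
    rintro _ ⟨a, ha, rfl⟩ _ ⟨b, hb, rfl⟩ hab
    exact Prod.ext hab ((h a ha b hb).mp hab)
  have hsnd : InjOn Prod.snd ((fun a => (f a, g a)) '' S) := by
    rintro _ ⟨a, ha, rfl⟩ _ ⟨b, hb, rfl⟩ hab
    exact Prod.ext ((h a ha b hb).mpr hab) hab
  calc (f '' S).ncard = (Prod.fst '' ((fun a => (f a, g a)) '' S)).ncard := by rw [image_image]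
    _ = (Prod.snd '' ((fun a => (f a, g a)) '' S)).ncard :=
      hfst.ncard_image.trans hsnd.ncard_image.symm
    _ = (g '' S).ncard := by rw [image_image]

noncomputable def partsMeeting (s : Setoid R) (K : Set R) : ℕ := (Quotient.mk s '' K).ncard

theorem rc_eq_partsMeeting_sub_one (s : Setoid R) (K : Set R) : rc s K = partsMeeting s K - 1 :=
  rfl

def saturation (s : Setoid R) (S : Set R) : Set R := {x | ∃ a ∈ S, s x a}

theorem subset_saturation (s : Setoid R) (S : Set R) : S ⊆ saturation s S :=
  fun x hx => ⟨x, hx, s.refl' x⟩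

def splitAt (s t : Setoid R) (c : Quotient s) : Setoid R where
  r x y := s x y ∧ (Quotient.mk s x = c → t x y)
  iseqv :=
    ⟨fun x => ⟨s.refl' x, fun _ => t.refl' x⟩,
     fun ⟨hs, ht⟩ => ⟨s.symm' hs, fun hy => t.symm' (ht ((Quotient.sound hs).trans hy))⟩,
     fun ⟨hs₁, ht₁⟩ ⟨hs₂, ht₂⟩ => ⟨s.trans' hs₁ hs₂,
       fun hx => t.trans' (ht₁ hx) (ht₂ ((Quotient.sound hs₁).symm.trans hx))⟩⟩

section PartsMeeting

variable {s t : Setoid R} {K L A : Set R}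

theorem partsMeeting_univ (s : Setoid R) : partsMeeting s univ = nparts s := by
  rw [partsMeeting, image_univ, range_quotient_mk, ncard_univ, nparts]

theorem partsMeeting_congr (h : ∀ x ∈ K, ∀ y ∈ K, s x y ↔ t x y) :
    partsMeeting s K = partsMeeting t K :=
  ncard_image_eq_ncard_image fun x hx y hy => by
    rw [Quotient.eq, Quotient.eq]
    exact h x hx y hy

theorem partsMeeting_saturation (h : s ≤ t) (S : Set R) :
    partsMeeting t (saturation s S) = partsMeeting t S := by
  refine congrArg ncard (Subset.antisymm ?_ (image_mono (subset_saturation s S)))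
  rintro _ ⟨x, ⟨a, ha, hxa⟩, rfl⟩
  exact ⟨a, ha, Quotient.sound (t.symm' (h hxa))⟩

variable [Finite R]

theorem partsMeeting_pos_iff : 0 < partsMeeting s K ↔ K.Nonempty := by
  rw [partsMeeting, ncard_pos, image_nonempty]

theorem partsMeeting_mono (h : K ⊆ L) : partsMeeting s K ≤ partsMeeting s L :=
  ncard_le_ncard (image_mono h)

theorem partsMeeting_anti (h : s ≤ t) : partsMeeting t K ≤ partsMeeting s K := by
  have : Quotient.mk t '' K = Setoid.map_of_le h '' (Quotient.mk s '' K) := by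
    rw [image_image]; rfl
  rw [partsMeeting, partsMeeting, this]
  exact ncard_image_le

theorem partsMeeting_top_le_one : partsMeeting ⊤ K ≤ 1 :=
  (ncard_le_one_iff (toFinite _)).mpr fun {a b} _ _ => by
    induction a using Quotient.inductionOn
    induction b using Quotient.inductionOn
    exact Quotient.sound trivial

theorem partsMeeting_eq_sdiff_add_inter (hA : ∀ ⦃x y⦄, s x y → y ∈ A → x ∈ A) :
    partsMeeting s K = partsMeeting s (K \ A) + partsMeeting s (K ∩ A) := by
  have hdisj : Disjoint (Quotient.mk s '' (K \ A)) (Quotient.mk s '' (K ∩ A)) := by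
    rw [disjoint_left]
    rintro _ ⟨x, hx, rfl⟩ ⟨y, hy, hyx⟩
    exact hx.2 (hA (Quotient.exact hyx.symm) hy.2)
  rw [partsMeeting, partsMeeting, partsMeeting, ← ncard_union_eq hdisj, ← image_union,
    sdiff_union_inter]

theorem partsMeeting_add_inter_eq (hs : ∀ ⦃x y⦄, s x y → y ∈ A → x ∈ A)
    (ht : ∀ ⦃x y⦄, t x y → y ∈ A → x ∈ A)
    (hst : ∀ x ∉ A, ∀ y ∉ A, s x y ↔ t x y) :
    partsMeeting s K + partsMeeting t (K ∩ A) = partsMeeting t K + partsMeeting s (K ∩ A) := by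
  have hoff : partsMeeting s (K \ A) = partsMeeting t (K \ A) :=
    partsMeeting_congr fun x hx y hy => hst x hx.2 y hy.2
  rw [partsMeeting_eq_sdiff_add_inter hs (K := K), partsMeeting_eq_sdiff_add_inter ht (K := K),
    hoff]
  ring

/-- Here `partsMeeting ⊤ K` is `1` or `0` according as `K` is nonempty or not. -/
theorem partsMeeting_top_add_le (s : Setoid R) (hKL : K ⊆ L) :
    partsMeeting ⊤ L + partsMeeting s K ≤ partsMeeting s L + partsMeeting ⊤ K := by
  rcases K.eq_empty_or_nonempty with rfl | hK
  · simpa [partsMeeting] using partsMeeting_anti le_top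
  · have : 0 < partsMeeting ⊤ K := partsMeeting_pos_iff.mpr hK
    have := partsMeeting_top_le_one (K := L)
    have := partsMeeting_mono (s := s) hKL
    omega

theorem partsMeeting_merge (s : Setoid R) (S K : Set R) :
    partsMeeting (merge s S) K + partsMeeting s (K ∩ saturation s S)
      = partsMeeting s K + partsMeeting ⊤ (K ∩ saturation s S) := by
  have hmerge : ∀ ⦃x y⦄, merge s S x y → y ∈ saturation s S → x ∈ saturation s S := by
    rintro x y (hxy | ⟨hx, -⟩) ⟨a, ha, hya⟩
    exacts [⟨a, ha, s.trans' hxy hya⟩, hx]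
  have hs : ∀ ⦃x y⦄, s x y → y ∈ saturation s S → x ∈ saturation s S :=
    fun x y hxy hy => hmerge (Or.inl hxy) hy
  have hoff : ∀ x ∉ saturation s S, ∀ y ∉ saturation s S, merge s S x y ↔ s x y :=
    fun x hx y _ => ⟨fun h => h.resolve_right fun h' => hx h'.1, Or.inl⟩
  have hon :
      partsMeeting (merge s S) (K ∩ saturation s S) = partsMeeting ⊤ (K ∩ saturation s S) :=
    partsMeeting_congr fun x hx y hy => iff_of_true (Or.inr ⟨hx.2, hy.2⟩) trivial
  rw [partsMeeting_add_inter_eq hmerge hs hoff, hon]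

theorem partsMeeting_splitAt (s t : Setoid R) (c : Quotient s) (K : Set R) :
    partsMeeting (splitAt s t c) K + partsMeeting ⊤ (K ∩ classOf s c)
      = partsMeeting s K + partsMeeting t (K ∩ classOf s c) := by
  have hs : ∀ ⦃x y⦄, s x y → y ∈ classOf s c → x ∈ classOf s c :=
    fun x y hxy hy => (Quotient.sound hxy).trans hy
  have hsplit : ∀ ⦃x y⦄, splitAt s t c x y → y ∈ classOf s c → x ∈ classOf s c :=
    fun x y hxy hy => hs hxy.1 hy
  have hoff : ∀ x ∉ classOf s c, ∀ y ∉ classOf s c, splitAt s t c x y ↔ s x y :=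
    fun x hx y _ => ⟨And.left, fun h => ⟨h, fun hx' => absurd hx' hx⟩⟩
  have hon_s : partsMeeting s (K ∩ classOf s c) = partsMeeting ⊤ (K ∩ classOf s c) :=
    partsMeeting_congr fun x hx y hy =>
      iff_of_true (Quotient.exact (hx.2.trans hy.2.symm)) trivial
  have hon_split :
      partsMeeting (splitAt s t c) (K ∩ classOf s c) = partsMeeting t (K ∩ classOf s c) :=
    partsMeeting_congr fun x hx y hy =>
      ⟨fun h => h.2 hx.2, fun h => ⟨Quotient.exact (hx.2.trans hy.2.symm), fun _ => h⟩⟩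
  rw [← hon_s, ← hon_split]
  exact partsMeeting_add_inter_eq hsplit hs hoff

theorem partsMeeting_merge_add_splitAt_le (σ p : Setoid R) (c : Quotient p) (K : Set R) :
    partsMeeting (merge σ (classOf p c)) K + partsMeeting (splitAt p σ c) K
      ≤ partsMeeting σ K + partsMeeting p K := by
  have hmerge := partsMeeting_merge σ (classOf p c) K
  have hsplit := partsMeeting_splitAt p σ c K
  have hexchange := partsMeeting_top_add_le σ
    (inter_subset_inter_right K (subset_saturation σ (classOf p c)))
  omega

theorem nparts_merge_add_splitAt (σ p : Setoid R) (c : Quotient p) :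
    nparts (merge σ (classOf p c)) + nparts (splitAt p σ c) = nparts σ + nparts p := by
  have hmerge := partsMeeting_merge σ (classOf p c) univ
  have hsplit := partsMeeting_splitAt p σ c univ
  simp only [univ_inter, partsMeeting_univ, partsMeeting_saturation le_rfl,
    partsMeeting_saturation le_top] at hmerge hsplit
  omega

end PartsMeeting

theorem le_merge (s : Setoid R) (S : Set R) : s ≤ merge s S :=
  fun _ _ => Or.inl

theorem merge_classOf_le_sup (σ p : Setoid R) (c : Quotient p) :
    merge σ (classOf p c) ≤ σ ⊔ p := by
  rintro x y (hxy | ⟨⟨a, ha, hxa⟩, ⟨b, hb, hyb⟩⟩)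
  · exact le_sup_left (a := σ) hxy
  · have hab : p a b := Quotient.exact (ha.trans hb.symm)
    exact (σ ⊔ p).trans' (le_sup_left (a := σ) hxa)
      ((σ ⊔ p).trans' (le_sup_right (a := σ) hab) (le_sup_left (a := σ) (σ.symm' hyb)))

theorem splitAt_le (s t : Setoid R) (c : Quotient s) : splitAt s t c ≤ s :=
  fun _ _ => And.left

theorem inf_le_splitAt (s t : Setoid R) (c : Quotient s) : s ⊓ t ≤ splitAt s t c :=
  fun _ _ h => ⟨h.1, fun _ => h.2⟩

structure IsFeasible (𝒦 : Finset (Set R)) (x : Set R → ℝ) : Prop where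
  nonneg : ∀ K ∈ 𝒦, 0 ≤ x K
  nparts_sub_one_le : ∀ σ : Setoid R, (nparts σ : ℝ) - 1 ≤ ∑ K ∈ 𝒦, x K * rc σ K

def IsTight (𝒦 : Finset (Set R)) (x : Set R → ℝ) (σ : Setoid R) : Prop :=
  ∑ K ∈ 𝒦, x K * rc σ K = (nparts σ : ℝ) - 1

instance [Finite R] : Finite (Setoid R) :=
  Finite.of_injective _ fun _ _ => Setoid.eq_iff_rel_eq.mpr

variable [Finite R] {𝒦 : Finset (Set R)} {x : Set R → ℝ} {σ p τ υ : Setoid R}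

theorem rc_add_le_of_partsMeeting_add_le {K : Set R}
    (h : partsMeeting τ K + partsMeeting υ K ≤ partsMeeting σ K + partsMeeting p K) :
    rc τ K + rc υ K ≤ rc σ K + rc p K := by
  simp only [rc_eq_partsMeeting_sub_one]
  rcases K.eq_empty_or_nonempty with rfl | hK
  · simp [partsMeeting]
  · have := (partsMeeting_pos_iff (s := τ)).mpr hK
    have := (partsMeeting_pos_iff (s := υ)).mpr hK
    omega

theorem IsFeasible.isTight_of_partsMeeting_add_le (hx : IsFeasible 𝒦 x) (hσ : IsTight 𝒦 x σ)
    (hp : IsTight 𝒦 x p)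
    (hK : ∀ K, partsMeeting τ K + partsMeeting υ K ≤ partsMeeting σ K + partsMeeting p K)
    (hn : nparts σ + nparts p = nparts τ + nparts υ) :
    IsTight 𝒦 x τ ∧ IsTight 𝒦 x υ := by
  have hsum : ∑ K ∈ 𝒦, x K * rc τ K + ∑ K ∈ 𝒦, x K * rc υ K
      ≤ ∑ K ∈ 𝒦, x K * rc σ K + ∑ K ∈ 𝒦, x K * rc p K := by
    simp only [← Finset.sum_add_distrib, ← mul_add]
    refine Finset.sum_le_sum fun K hK𝒦 => mul_le_mul_of_nonneg_left ?_ (hx.nonneg K hK𝒦)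
    exact_mod_cast rc_add_le_of_partsMeeting_add_le (hK K)
  have hn' : (nparts σ : ℝ) + nparts p = nparts τ + nparts υ := by exact_mod_cast hn
  have hτ := hx.nparts_sub_one_le τ
  have hυ := hx.nparts_sub_one_le υ
  unfold IsTight at *
  constructor <;> linarith

theorem IsFeasible.isTight_merge_and_splitAt (hx : IsFeasible 𝒦 x) (hσ : IsTight 𝒦 x σ)
    (hp : IsTight 𝒦 x p) (c : Quotient p) :
    IsTight 𝒦 x (merge σ (classOf p c)) ∧ IsTight 𝒦 x (splitAt p σ c) :=
  hx.isTight_of_partsMeeting_add_le hσ hp (partsMeeting_merge_add_splitAt_le σ p c)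
    (nparts_merge_add_splitAt σ p c).symm

theorem IsFeasible.isTight_sup (hx : IsFeasible 𝒦 x) (hσ : IsTight 𝒦 x σ)
    (hp : IsTight 𝒦 x p) :
    IsTight 𝒦 x (σ ⊔ p) := by
  induction σ using WellFoundedGT.induction with
  | _ σ ih =>
    by_cases hle : p ≤ σ
    · rwa [sup_eq_left.mpr hle]
    obtain ⟨u, v, huv, hnuv⟩ : ∃ u v, p u v ∧ ¬σ u v := by
      simpa [Setoid.le_def] using hle
    set τ := merge σ (classOf p (Quotient.mk p u))
    have hv : v ∈ classOf p (Quotient.mk p u) := Quotient.sound (p.symm' huv)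
    have hστ : σ < τ := lt_of_le_not_ge (le_merge _ _) fun h =>
      hnuv <| h <| Or.inr ⟨⟨u, rfl, σ.refl' u⟩, ⟨v, hv, σ.refl' v⟩⟩
    have hτp : τ ⊔ p = σ ⊔ p :=
      le_antisymm (sup_le (merge_classOf_le_sup σ p _) le_sup_right)
        (sup_le_sup_right hστ.le p)
    exact hτp ▸ ih τ hστ (hx.isTight_merge_and_splitAt hσ hp _).1

theorem IsFeasible.isTight_inf (hx : IsFeasible 𝒦 x) (hσ : IsTight 𝒦 x σ)
    (hp : IsTight 𝒦 x p) :
    IsTight 𝒦 x (σ ⊓ p) := by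
  induction σ using WellFoundedLT.induction with
  | _ σ ih =>
    by_cases hle : σ ≤ p
    · rwa [inf_eq_left.mpr hle]
    obtain ⟨u, v, huv, hnuv⟩ : ∃ u v, σ u v ∧ ¬p u v := by
      simpa [Setoid.le_def] using hle
    set τ := splitAt σ p (Quotient.mk σ u)
    have hτσ : τ < σ := lt_of_le_not_ge (splitAt_le _ _ _) fun h => hnuv ((h huv).2 rfl)
    have hτp : τ ⊓ p = σ ⊓ p :=
      le_antisymm (inf_le_inf_right p hτσ.le) (le_inf (inf_le_splitAt σ p _) inf_le_right)
    exact hτp ▸ ih τ hτσ (hx.isTight_merge_and_splitAt hp hσ _).2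

end SteinerLP

open SteinerLP in
theorem tight_inf_and_sup_of_tight_general {R : Type*} [Fintype R]
    (𝒦 : Finset (Set R))
    (x : Set R → ℝ) (hx : ∀ K ∈ 𝒦, 0 ≤ x K)
    (hfeas : ∀ σ : Setoid R, (nparts σ : ℝ) - 1 ≤ ∑ K ∈ 𝒦, x K * rc σ K)
    (π π' : Setoid R)
    (hπ : ∑ K ∈ 𝒦, x K * rc π K = (nparts π : ℝ) - 1)
    (hπ' : ∑ K ∈ 𝒦, x K * rc π' K = (nparts π' : ℝ) - 1) :
    (∑ K ∈ 𝒦, x K * rc (π ⊓ π') K = (nparts (π ⊓ π') : ℝ) - 1) ∧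
    (∑ K ∈ 𝒦, x K * rc (π ⊔ π') K = (nparts (π ⊔ π') : ℝ) - 1) :=
  have hfeasible : IsFeasible 𝒦 x := ⟨hx, hfeas⟩
  ⟨hfeasible.isTight_inf hπ hπ', hfeasible.isTight_sup hπ hπ'⟩

open SteinerLP in
/-- if `x ≥ 0` is feasible for the partition LP and partitions `π, π'` are tight,
then so are the meet `π ⊓ π'` and the join `π ⊔ π'`. -/
theorem tight_inf_and_sup_of_tight {R : Type*} [Fintype R]
    (𝒦 : Finset (Set R)) (hKne : ∀ K ∈ 𝒦, K.Nonempty)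
    (x : Set R → ℝ) (hx : ∀ K ∈ 𝒦, 0 ≤ x K)
    (hfeas : ∀ σ : Setoid R, (nparts σ : ℝ) - 1 ≤ ∑ K ∈ 𝒦, x K * rc σ K)
    (π π' : Setoid R)
    (hπ : ∑ K ∈ 𝒦, x K * rc π K = (nparts π : ℝ) - 1)
    (hπ' : ∑ K ∈ 𝒦, x K * rc π' K = (nparts π' : ℝ) - 1) :
    (∑ K ∈ 𝒦, x K * rc (π ⊓ π') K = (nparts (π ⊓ π') : ℝ) - 1) ∧
    (∑ K ∈ 𝒦, x K * rc (π ⊔ π') K = (nparts (π ⊔ π') : ℝ) - 1) :=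
  tight_inf_and_sup_of_tight_general 𝒦 x hx hfeas π π' hπ hπ'
end

section
/- Let R be a finite set and x : 𝒦 → ℝ≥0 where 𝒦 is the set of nonempty subsets of R. If x satisfies the subtour elimination constraints Σ_K x_K ρ(K ∩ S) ≤ ρ(S) for all S ⊂ R together with the equality Σ_K x_K ρ(K) = ρ(R), then x satisfies the partition constraints Σ_K x_K rc_K^π ≥ r(π) - 1 for every partition π of R. -/
open Classical

section Aux

open SteinerLP

variable {R : Type*} [Fintype R]

private lemma inter_class_eq (π : Setoid R) (K : Set R) (c : Quotient π) :
    K ∩ classOf π c = ↑(K.toFinset.filter (fun a => Quotient.mk π a = c)) := by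
  ext a; simp [classOf]

private lemma sum_ncard_inter (π : Setoid R) [Fintype (Quotient π)] (K : Set R) :
    ∑ c : Quotient π, (K ∩ classOf π c).ncard = K.ncard := by
  calc ∑ c : Quotient π, (K ∩ classOf π c).ncard
      = ∑ c : Quotient π, (K.toFinset.filter (fun a => Quotient.mk π a = c)).card := by
        refine Finset.sum_congr rfl fun c _ => ?_
        rw [inter_class_eq, Set.ncard_coe_finset]
    _ = K.toFinset.card :=
        (Finset.card_eq_sum_card_fiberwise (fun a _ => Finset.mem_univ _)).symm
    _ = K.ncard := (Set.ncard_eq_toFinset_card' K).symm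

private lemma image_eq_met (π : Setoid R) [Fintype (Quotient π)] (K : Set R) :
    (Quotient.mk π '' K) =
      ↑(Finset.univ.filter (fun c : Quotient π => (K ∩ classOf π c).Nonempty)) := by
  ext c
  simp only [Set.mem_image, Finset.coe_filter, Finset.mem_univ, true_and, Set.mem_setOf_eq,
    Set.Nonempty, Set.mem_inter_iff, classOf]

private lemma rho_split (π : Setoid R) [Fintype (Quotient π)] (K : Set R) (hK : K.Nonempty) :
    rho K = (∑ c : Quotient π, rho (K ∩ classOf π c)) + rc π K := by
  classical
  set met := Finset.univ.filter (fun c : Quotient π => (K ∩ classOf π c).Nonempty) with hmet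
  have hzero : ∀ c ∈ (Finset.univ : Finset (Quotient π)), c ∉ met →
      (K ∩ classOf π c).ncard = 0 := by
    intro c _ hc
    simp only [hmet, Finset.mem_filter, Finset.mem_univ, true_and] at hc
    rw [Set.not_nonempty_iff_eq_empty] at hc
    simp [hc]
  have hpos : ∀ c ∈ met, 1 ≤ (K ∩ classOf π c).ncard := by
    intro c hc
    simp only [hmet, Finset.mem_filter, Finset.mem_univ, true_and] at hc
    exact (Set.ncard_pos (Set.toFinite _)).mpr hc
  have hsum : ∑ c ∈ met, (K ∩ classOf π c).ncard = K.ncard := by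
    rw [Finset.sum_subset (Finset.subset_univ met) hzero]
    exact sum_ncard_inter π K
  have hsumrho : ∑ c : Quotient π, rho (K ∩ classOf π c) = ∑ c ∈ met, rho (K ∩ classOf π c) := by
    refine (Finset.sum_subset (Finset.subset_univ met) ?_).symm
    intro c hc hc'
    have := hzero c hc hc'
    simp [rho, this]
  have hsplit : ∑ c ∈ met, (K ∩ classOf π c).ncard
      = (∑ c ∈ met, rho (K ∩ classOf π c)) + met.card := by
    rw [Finset.card_eq_sum_ones, ← Finset.sum_add_distrib]
    refine Finset.sum_congr rfl fun c hc => ?_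
    have := hpos c hc
    unfold rho
    omega
  have hrc : rc π K = met.card - 1 := by
    unfold rc
    rw [image_eq_met π K, Set.ncard_coe_finset]
  have hmet1 : 1 ≤ met.card := by
    obtain ⟨a, ha⟩ := hK
    refine Finset.card_pos.mpr ⟨Quotient.mk π a, ?_⟩
    simp only [hmet, Finset.mem_filter, Finset.mem_univ, true_and]
    exact ⟨a, ha, rfl⟩
  have hK1 : 1 ≤ K.ncard := (Set.ncard_pos (Set.toFinite _)).mpr hK
  rw [hrc, hsumrho]
  simp only [rho] at hsplit ⊢
  omega

end Aux

open SteinerLP in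
/-- the subtour elimination constraints (for all proper `S ⊂ R`) together with
the equality `Σ_K x_K ρ(K) = ρ(R)` imply all partition constraints. -/
theorem subtour_implies_partition {R : Type*} [Fintype R]
    (𝒦 : Finset (Set R)) (hKne : ∀ K ∈ 𝒦, K.Nonempty)
    (x : Set R → ℝ) (hx : ∀ K ∈ 𝒦, 0 ≤ x K)
    (hsub : ∀ S : Set R, S ≠ Set.univ → ∑ K ∈ 𝒦, x K * rho (K ∩ S) ≤ (rho S : ℝ))
    (heq : ∑ K ∈ 𝒦, x K * rho K = (rho (Set.univ : Set R) : ℝ)) :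
    ∀ π : Setoid R, (nparts π : ℝ) - 1 ≤ ∑ K ∈ 𝒦, x K * rc π K := by
  intro π
  haveI : Fintype (Quotient π) := Fintype.ofFinite _
  have hnparts : nparts π = Fintype.card (Quotient π) := Nat.card_eq_fintype_card
  by_cases ht : Fintype.card (Quotient π) ≤ 1
  · have h1 : (nparts π : ℝ) - 1 ≤ 0 := by
      rw [hnparts]
      have : (Fintype.card (Quotient π) : ℝ) ≤ 1 := by exact_mod_cast ht
      linarith
    exact h1.trans (Finset.sum_nonneg fun K hK => mul_nonneg (hx K hK) (Nat.cast_nonneg _))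
  · push_neg at ht
    have hQne : Nonempty (Quotient π) := Fintype.card_pos_iff.mp (by omega)
    have hRne : Nonempty R := hQne.elim fun q => q.exists_rep.elim fun a _ => ⟨a⟩
    have hclassne : ∀ c : Quotient π, (classOf π c).Nonempty := by
      intro c; obtain ⟨a, ha⟩ := c.exists_rep; exact ⟨a, ha⟩
    have hclass1 : ∀ c : Quotient π, 1 ≤ (classOf π c).ncard := fun c =>
      (Set.ncard_pos (Set.toFinite _)).mpr (hclassne c)
    have hclassne_univ : ∀ c : Quotient π, classOf π c ≠ Set.univ := by
      intro c hc
      have hall : ∀ q : Quotient π, q = c := by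
        intro q; obtain ⟨a, ha⟩ := q.exists_rep
        have h2 : a ∈ classOf π c := hc ▸ Set.mem_univ a
        rw [← ha]; exact h2
      have : Fintype.card (Quotient π) ≤ 1 :=
        Fintype.card_le_one_iff.mpr fun a b => (hall a).trans (hall b).symm
      omega
    have hcardR : (Set.univ : Set R).ncard = Fintype.card R := by
      simp [Set.ncard_univ, Nat.card_eq_fintype_card]
    have hn1 : 1 ≤ Fintype.card R := Fintype.card_pos_iff.mpr hRne
    have hsum_parts : ∑ c : Quotient π, (classOf π c).ncard = Fintype.card R := by
      have h := sum_ncard_inter π (Set.univ : Set R)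
      simpa [Set.univ_inter, hcardR] using h
    have hrho_cast : ∀ (S : Set R), 1 ≤ S.ncard → ((rho S : ℝ)) = (S.ncard : ℝ) - 1 := by
      intro S hS
      unfold rho
      rw [Nat.cast_sub hS, Nat.cast_one]
    have hparts_real : ∑ c : Quotient π, ((rho (classOf π c) : ℝ))
        = (Fintype.card R : ℝ) - (Fintype.card (Quotient π) : ℝ) := by
      rw [Finset.sum_congr rfl (fun c _ => hrho_cast _ (hclass1 c)), Finset.sum_sub_distrib]
      rw [Finset.sum_const, Finset.card_univ, nsmul_eq_mul, mul_one, ← Nat.cast_sum, hsum_parts]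
    have hrho_univ : ((rho (Set.univ : Set R) : ℝ)) = (Fintype.card R : ℝ) - 1 := by
      rw [hrho_cast _ (by omega : 1 ≤ (Set.univ : Set R).ncard), hcardR]
    have hkey : ∀ K ∈ 𝒦, ((rc π K : ℝ))
        = (rho K : ℝ) - ∑ c : Quotient π, ((rho (K ∩ classOf π c) : ℝ)) := by
      intro K hK
      have h := rho_split π K (hKne K hK)
      have h' : ((rho K : ℕ) : ℝ)
          = (∑ c : Quotient π, ((rho (K ∩ classOf π c) : ℕ) : ℝ)) + (rc π K : ℝ) := by
        exact_mod_cast h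
      linarith
    have h1 : ∑ K ∈ 𝒦, x K * rho K = (Fintype.card R : ℝ) - 1 := by rw [heq, hrho_univ]
    have h2 : ∑ c : Quotient π, (∑ K ∈ 𝒦, x K * ((rho (K ∩ classOf π c) : ℝ)))
        ≤ (Fintype.card R : ℝ) - (Fintype.card (Quotient π) : ℝ) := by
      rw [← hparts_real]
      exact Finset.sum_le_sum fun c _ => hsub (classOf π c) (hclassne_univ c)
    have h3 : ∑ K ∈ 𝒦, x K * rc π K
        = (∑ K ∈ 𝒦, x K * rho K)
          - ∑ c : Quotient π, (∑ K ∈ 𝒦, x K * ((rho (K ∩ classOf π c) : ℝ))) := by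
      rw [Finset.sum_comm, ← Finset.sum_sub_distrib]
      refine Finset.sum_congr rfl fun K hK => ?_
      rw [← Finset.mul_sum, ← mul_sub, hkey K hK]
    rw [h3, hnparts, h1]
    linarith
end

section
/- Let R be a finite set and x : 𝒦 → ℝ≥0. If x satisfies the partition constraints Σ_K x_K rc_K^π ≥ r(π) - 1 for all partitions π of R, together with the equality Σ_K x_K (|K| - 1) = |R| - 1, then x satisfies the subtour constraints Σ_K x_K ρ(K ∩ S) ≤ ρ(S) for all subsets S ⊆ R. -/
open Classical

open SteinerLP in
/-- the partition constraints together with the equality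
`Σ_K x_K (|K| - 1) = |R| - 1` imply all subtour constraints `Σ_K x_K ρ(K ∩ S) ≤ ρ(S)`. -/
theorem partition_implies_subtour {R : Type*} [Fintype R]
    (𝒦 : Finset (Set R)) (hKne : ∀ K ∈ 𝒦, K.Nonempty)
    (x : Set R → ℝ) (hx : ∀ K ∈ 𝒦, 0 ≤ x K)
    (hpart : ∀ π : Setoid R, (nparts π : ℝ) - 1 ≤ ∑ K ∈ 𝒦, x K * rc π K)
    (heq : ∑ K ∈ 𝒦, x K * ((K.ncard : ℝ) - 1) = (Fintype.card R : ℝ) - 1) :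
    ∀ S : Set R, ∑ K ∈ 𝒦, x K * rho (K ∩ S) ≤ (rho S : ℝ) := by
  intro S
  rcases S.eq_empty_or_nonempty with rfl | hS
  · simp [rho, Set.inter_empty]
  · set π := merge ⊥ S with hπ
    set q : R → Set R := fun a => if a ∈ S then S else {a} with hqdef
    have hrel : ∀ a b, π.r a b ↔ (a = b ∨ (a ∈ S ∧ b ∈ S)) := by
      intro a b
      show (⊥ : Setoid R).r a b ∨ _ ↔ _
      have hb : ∀ u v : R, (⊥ : Setoid R).r u v ↔ u = v := fun u v => Iff.rfl
      simp only [hb]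
      constructor
      · rintro (rfl | ⟨⟨c, hc, rfl⟩, ⟨d, hd, rfl⟩⟩)
        · exact Or.inl rfl
        · exact Or.inr ⟨hc, hd⟩
      · rintro (rfl | ⟨ha, hb'⟩)
        · exact Or.inl rfl
        · exact Or.inr ⟨⟨a, ha, rfl⟩, ⟨b, hb', rfl⟩⟩
    have hq_eq : ∀ a b, q a = q b ↔ (a = b ∨ (a ∈ S ∧ b ∈ S)) := by
      intro a b
      constructor
      · intro h
        by_cases ha : a ∈ S <;> by_cases hb : b ∈ S
        · exact Or.inr ⟨ha, hb⟩
        · exfalso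
          simp only [hqdef, if_pos ha, if_neg hb] at h
          exact hb (by rw [h]; exact rfl)
        · exfalso
          simp only [hqdef, if_neg ha, if_pos hb] at h
          exact ha (by rw [← h]; exact rfl)
        · simp only [hqdef, if_neg ha, if_neg hb] at h
          exact Or.inl (Set.singleton_eq_singleton_iff.1 h)
      · rintro (rfl | ⟨ha, hb⟩)
        · rfl
        · simp [hqdef, ha, hb]
    have hcompat : ∀ a b, π.r a b → q a = q b := fun a b h =>
      (hq_eq a b).2 ((hrel a b).1 h)
    set g : Quotient π → Set R := Quotient.lift q hcompat with hg
    have ginj : Function.Injective g := by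
      rintro ⟨a⟩ ⟨b⟩ h
      exact Quotient.sound ((hrel a b).2 ((hq_eq a b).1 h))
    have hcomp : g ∘ Quotient.mk π = q := funext fun a => rfl
    have himg : ∀ K : Set R, (Quotient.mk π '' K).ncard = (q '' K).ncard := by
      intro K
      have : g '' (Quotient.mk π '' K) = q '' K := by
        rw [← Set.image_comp, hcomp]
      rw [← this, Set.ncard_image_of_injective _ ginj]
    have hqimg : ∀ K : Set R,
        (q '' K).ncard = (K \ S).ncard + (if (K ∩ S).Nonempty then 1 else 0) := by
      intro K
      by_cases h : (K ∩ S).Nonempty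
      · have him : q '' K = insert S ((fun a => ({a} : Set R)) '' (K \ S)) := by
          ext y
          simp only [Set.mem_image, Set.mem_insert_iff, Set.mem_diff, hqdef]
          constructor
          · rintro ⟨a, haK, rfl⟩
            by_cases haS : a ∈ S
            · simp [haS]
            · exact Or.inr ⟨a, ⟨haK, haS⟩, by simp [haS]⟩
          · rintro (rfl | ⟨a, ⟨haK, haS⟩, rfl⟩)
            · obtain ⟨a, haK, haS⟩ := h
              exact ⟨a, haK, by simp [haS]⟩
            · exact ⟨a, haK, by simp [haS]⟩
        have hnm : S ∉ (fun a => ({a} : Set R)) '' (K \ S) := by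
          rintro ⟨a, ⟨haK, haS⟩, hEq⟩
          exact haS (by rw [← hEq]; exact rfl)
        rw [him, Set.ncard_insert_of_notMem hnm (Set.toFinite _),
          Set.ncard_image_of_injective _ Set.singleton_injective, if_pos h]
      · have hKS : K \ S = K := by
          ext a
          simp only [Set.mem_diff, and_iff_left_iff_imp]
          exact fun haK haS => h ⟨a, haK, haS⟩
        have him : q '' K = (fun a => ({a} : Set R)) '' K := by
          apply Set.image_congr
          intro a haK
          have haS : a ∉ S := fun hs => h ⟨a, haK, hs⟩
          simp [hqdef, haS]
        rw [him, Set.ncard_image_of_injective _ Set.singleton_injective, if_neg h, hKS]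
        omega
    have hScard : S.ncard + (Set.univ \ S).ncard = Fintype.card R := by
      have := Set.ncard_inter_add_ncard_diff_eq_ncard Set.univ S (Set.toFinite _)
      rwa [Set.univ_inter, Set.ncard_univ, Nat.card_eq_fintype_card] at this
    have hnparts : nparts π = (Set.univ \ S).ncard + 1 := by
      have h1 : Nat.card (Quotient π) = Nat.card (Set.range g) :=
        (Nat.card_range_of_injective ginj).symm
      have h2 : Set.range g = q '' Set.univ := by
        ext y
        constructor
        · rintro ⟨c, rfl⟩
          induction c using Quotient.ind with
          | _ a => exact ⟨a, trivial, rfl⟩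
        · rintro ⟨a, -, rfl⟩
          exact ⟨Quotient.mk π a, rfl⟩
      have h3 : (q '' Set.univ).ncard = (Set.univ \ S).ncard + 1 := by
        rw [hqimg, if_pos (by rwa [Set.univ_inter])]
      rw [nparts, h1, h2, Nat.card_coe_set_eq, h3]
    have key : ∀ K ∈ 𝒦, (rho (K ∩ S) : ℝ) = ((K.ncard : ℝ) - 1) - (rc π K : ℝ) := by
      intro K hK
      have hsum : (K ∩ S).ncard + (K \ S).ncard = K.ncard :=
        Set.ncard_inter_add_ncard_diff_eq_ncard K S (Set.toFinite _)
      have hrc : rc π K = (K \ S).ncard + (if (K ∩ S).Nonempty then 1 else 0) - 1 := by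
        rw [rc, himg, hqimg]
      by_cases h : (K ∩ S).Nonempty
      · have h1 : 1 ≤ (K ∩ S).ncard := (Set.ncard_pos (Set.toFinite _)).2 h
        rw [rho, hrc, if_pos h]
        simp only [Nat.add_sub_cancel]
        rw [Nat.cast_sub h1]
        have : ((K ∩ S).ncard : ℝ) + ((K \ S).ncard : ℝ) = (K.ncard : ℝ) := by
          exact_mod_cast congrArg (Nat.cast (R := ℝ)) hsum
        push_cast
        linarith
      · have hKS : K ∩ S = ∅ := Set.not_nonempty_iff_eq_empty.1 h
        have hKd : K \ S = K := by
          ext a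
          simp only [Set.mem_diff, and_iff_left_iff_imp]
          exact fun haK haS => h ⟨a, haK, haS⟩
        have h1 : 1 ≤ K.ncard := (Set.ncard_pos (Set.toFinite _)).2 (hKne K hK)
        have hrc' : (rc π K : ℝ) = (K.ncard : ℝ) - 1 := by
          rw [hrc, if_neg h, hKd]
          simp only [Nat.add_zero]
          rw [Nat.cast_sub h1]
          norm_num
        rw [hKS, hrc']
        simp [rho, Set.ncard_empty]
    have hsum_eq : ∑ K ∈ 𝒦, x K * (rho (K ∩ S) : ℝ)
        = ((Fintype.card R : ℝ) - 1) - ∑ K ∈ 𝒦, x K * (rc π K : ℝ) := by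
      rw [← heq, ← Finset.sum_sub_distrib]
      apply Finset.sum_congr rfl
      intro K hK
      rw [key K hK]
      ring
    have hp := hpart π
    have hS1 : 1 ≤ S.ncard := (Set.ncard_pos (Set.toFinite _)).2 hS
    have hrhoS : (rho S : ℝ) = (S.ncard : ℝ) - 1 := by
      rw [rho, Nat.cast_sub hS1]; norm_num
    have hnp : (nparts π : ℝ) = (Fintype.card R : ℝ) - (S.ncard : ℝ) + 1 := by
      rw [hnparts]
      have : ((S.ncard : ℝ)) + ((Set.univ \ S).ncard : ℝ) = (Fintype.card R : ℝ) := by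
        exact_mod_cast congrArg (Nat.cast (R := ℝ)) hScard
      push_cast
      linarith
    rw [hsum_eq, hrhoS]
    rw [hnp] at hp
    linarith
end

section
/- The bounded partition polytope {x ≥ 0 : Σ_K x_K rc_K^π ≥ r(π)-1 ∀π, Σ_K x_K(|K|-1) = |R|-1} equals the subtour polytope {x ≥ 0 : Σ_K x_K ρ(K∩S) ≤ ρ(S) ∀S ⊂ R, Σ_K x_K ρ(K) = ρ(R)}, as subsets of ℝ^𝒦. -/
open Classical

/-!
Splitting a hyperedge `K` along the classes `C` of a partition `π` gives
`ρ(K) - rc_K^π = ∑_C ρ(K ∩ C)`, while `∑_C ρ(C) = |R| - r(π)`. So, given the equality constraint,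
the partition inequality for `π` says `∑_C ∑_K x_K ρ(K ∩ C) ≤ ∑_C ρ(C)`. The subtour inequalities,
together with the equality constraint (the case `S = R`), give this class by class. Conversely,
for the partition whose only non-singleton class is `S`, singletons contribute nothing on either
side and it is the subtour inequality for `S`.
-/

namespace SteinerLP

open Finset

variable {R : Type*}

lemma nparts_sub_one_eq_rc_univ (s : Setoid R) : nparts s - 1 = rc s Set.univ := by
  rw [rc, Set.image_univ_of_surjective Quotient.mk_surjective, Set.ncard_univ, nparts]

lemma mem_classOf_merge_bot {S : Set R} {a z : R} :
    z ∈ classOf (merge ⊥ S) ⟦a⟧ ↔ z = a ∨ z ∈ S ∧ a ∈ S := by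
  change ⟦z⟧ = ⟦a⟧ ↔ _
  rw [Quotient.eq]
  change z = a ∨ ((∃ b ∈ S, z = b) ∧ (∃ b ∈ S, a = b)) ↔ _
  simp

lemma classOf_merge_bot_of_mem {S : Set R} {a : R} (ha : a ∈ S) :
    classOf (merge ⊥ S) ⟦a⟧ = S := by
  ext z
  rw [mem_classOf_merge_bot]
  constructor
  · rintro (rfl | ⟨hz, -⟩) <;> assumption
  · exact fun hz => Or.inr ⟨hz, ha⟩

lemma classOf_merge_bot_of_notMem {S : Set R} {a : R} (ha : a ∉ S) :
    classOf (merge ⊥ S) ⟦a⟧ = {a} := by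
  ext z
  simp [mem_classOf_merge_bot, ha]

section Finite

variable [Finite R]

lemma rho_eq_ncard_sub_ite (T : Set R) :
    (rho T : ℝ) = T.ncard - if T.Nonempty then 1 else 0 := by
  rcases T.eq_empty_or_nonempty with rfl | hT
  · simp [rho]
  · rw [if_pos hT, rho, Nat.cast_sub ((Set.ncard_pos).2 hT), Nat.cast_one]

lemma rho_eq_ncard_sub_one {T : Set R} (hT : T.Nonempty) : (rho T : ℝ) = T.ncard - 1 := by
  rw [rho_eq_ncard_sub_ite, if_pos hT]

lemma rho_eq_zero_of_subsingleton {T : Set R} (hT : T.Subsingleton) : rho T = 0 :=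
  Nat.sub_eq_zero_of_le (Set.ncard_le_one_iff_subsingleton.2 hT)

end Finite

variable [Fintype R]

lemma sum_ncard_inter_classOf (s : Setoid R) (K : Set R) :
    ∑ c : Quotient s, (K ∩ classOf s c).ncard = K.ncard := by
  simp only [fun T : Set R => Set.ncard_eq_toFinset_card T]
  rw [Finset.card_eq_sum_card_fiberwise (f := Quotient.mk s) (t := Finset.univ)
    fun _ _ => Finset.mem_univ _]
  refine Finset.sum_congr rfl fun c _ => congrArg Finset.card ?_
  ext a
  simp [classOf]

lemma card_filter_inter_classOf_nonempty (s : Setoid R) (K : Set R) :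
    #{c : Quotient s | (K ∩ classOf s c).Nonempty} = (Quotient.mk s '' K).ncard := by
  rw [Set.ncard_eq_toFinset_card _]
  congr 1
  ext c
  simp [classOf, Set.Nonempty]

lemma sum_rho_inter_classOf (s : Setoid R) {K : Set R} (hK : K.Nonempty) :
    ∑ c : Quotient s, (rho (K ∩ classOf s c) : ℝ) = K.ncard - 1 - rc s K := by
  have hmeet : 1 ≤ (Quotient.mk s '' K).ncard := (Set.ncard_pos).2 (hK.image _)
  simp_rw [rho_eq_ncard_sub_ite, Finset.sum_sub_distrib, Finset.sum_boole]
  rw [← Nat.cast_sum, sum_ncard_inter_classOf, card_filter_inter_classOf_nonempty, rc,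
    Nat.cast_sub hmeet]
  ring

lemma sum_rho_classOf [Nonempty R] (s : Setoid R) :
    ∑ c : Quotient s, (rho (classOf s c) : ℝ) = Fintype.card R - nparts s := by
  have h := sum_rho_inter_classOf s (Set.univ_nonempty (α := R))
  have : Nonempty (Quotient s) := .map (Quotient.mk s) ‹_›
  have hparts : 1 ≤ nparts s := Nat.card_pos
  simp only [Set.univ_inter, Set.ncard_univ, Nat.card_eq_fintype_card] at h
  rw [h, ← nparts_sub_one_eq_rc_univ, Nat.cast_sub hparts]
  ring

lemma sum_classOf_merge_bot {g : Set R → ℝ} (hg : ∀ T : Set R, T.Subsingleton → g T = 0)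
    (S : Set R) : ∑ c : Quotient (merge ⊥ S), g (classOf (merge ⊥ S) c) = g S := by
  have hout : ∀ a ∉ S, g (classOf (merge ⊥ S) ⟦a⟧) = 0 := fun a ha => by
    rw [classOf_merge_bot_of_notMem ha]
    exact hg _ Set.subsingleton_singleton
  rcases S.eq_empty_or_nonempty with rfl | ⟨a, ha⟩
  · rw [hg ∅ Set.subsingleton_empty]
    exact Finset.sum_eq_zero fun c _ => Quotient.inductionOn c fun b => hout b (Set.notMem_empty b)
  · rw [Finset.sum_eq_single ⟦a⟧, classOf_merge_bot_of_mem ha]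
    · intro c _ hc
      induction c using Quotient.inductionOn with
      | h b => exact hout b fun hbS => hc (mem_classOf_merge_bot.2 (Or.inr ⟨hbS, ha⟩))
    · exact fun h => absurd (Finset.mem_univ _) h

noncomputable def weightedRank (𝒦 : Finset (Set R)) (x : Set R → ℝ) (T : Set R) : ℝ :=
  ∑ K ∈ 𝒦, x K * rho (K ∩ T)

lemma weightedRank_eq_zero_of_subsingleton (𝒦 : Finset (Set R)) (x : Set R → ℝ) {T : Set R}
    (hT : T.Subsingleton) : weightedRank 𝒦 x T = 0 :=
  Finset.sum_eq_zero fun K _ => by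
    rw [rho_eq_zero_of_subsingleton (hT.anti Set.inter_subset_right), Nat.cast_zero, mul_zero]

lemma sum_mul_rho_eq {𝒦 : Finset (Set R)} (h𝒦 : ∀ K ∈ 𝒦, K.Nonempty) (x : Set R → ℝ) :
    ∑ K ∈ 𝒦, x K * rho K = ∑ K ∈ 𝒦, x K * ((K.ncard : ℝ) - 1) :=
  Finset.sum_congr rfl fun K hK => by rw [rho_eq_ncard_sub_one (h𝒦 K hK)]

lemma sum_mul_rc_eq {𝒦 : Finset (Set R)} (h𝒦 : ∀ K ∈ 𝒦, K.Nonempty) (x : Set R → ℝ)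
    (s : Setoid R) :
    ∑ K ∈ 𝒦, x K * rc s K =
      ∑ K ∈ 𝒦, x K * ((K.ncard : ℝ) - 1) - ∑ c : Quotient s, weightedRank 𝒦 x (classOf s c) := by
  simp only [weightedRank]
  rw [Finset.sum_comm, ← Finset.sum_sub_distrib]
  refine Finset.sum_congr rfl fun K hK => ?_
  rw [← Finset.mul_sum, sum_rho_inter_classOf s (h𝒦 K hK)]
  ring

lemma nparts_sub_one_le_sum_mul_rc_iff [Nonempty R] {𝒦 : Finset (Set R)} (h𝒦 : ∀ K ∈ 𝒦, K.Nonempty)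
    {x : Set R → ℝ} (hx : ∑ K ∈ 𝒦, x K * ((K.ncard : ℝ) - 1) = Fintype.card R - 1)
    (s : Setoid R) :
    (nparts s : ℝ) - 1 ≤ ∑ K ∈ 𝒦, x K * rc s K ↔
      ∑ c : Quotient s, weightedRank 𝒦 x (classOf s c) ≤
        ∑ c : Quotient s, (rho (classOf s c) : ℝ) := by
  rw [sum_mul_rc_eq h𝒦, hx, sum_rho_classOf]
  constructor <;> intro h <;> linarith

end SteinerLP

open SteinerLP in
/-- with `𝒦` all nonempty subsets of a finite nonempty set `R`, the bounded
partition polytope equals the subtour polytope, as subsets of `ℝ^𝒦`. -/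
theorem bounded_partition_polytope_eq_subtour_polytope {R : Type*} [Fintype R] [Nonempty R] :
    {x : Set R → ℝ |
        (∀ K ∈ Finset.univ.filter (fun K : Set R => K.Nonempty), 0 ≤ x K) ∧
        (∀ π : Setoid R, (nparts π : ℝ) - 1 ≤
          ∑ K ∈ Finset.univ.filter (fun K : Set R => K.Nonempty), x K * rc π K) ∧
        ∑ K ∈ Finset.univ.filter (fun K : Set R => K.Nonempty), x K * ((K.ncard : ℝ) - 1) =
          (Fintype.card R : ℝ) - 1} =
    {x : Set R → ℝ |
        (∀ K ∈ Finset.univ.filter (fun K : Set R => K.Nonempty), 0 ≤ x K) ∧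
        (∀ S : Set R, S ≠ Set.univ →
          ∑ K ∈ Finset.univ.filter (fun K : Set R => K.Nonempty), x K * rho (K ∩ S) ≤
            (rho S : ℝ)) ∧
        ∑ K ∈ Finset.univ.filter (fun K : Set R => K.Nonempty), x K * rho K =
          (rho (Set.univ : Set R) : ℝ)} := by
  have h𝒦 : ∀ K ∈ Finset.univ.filter (fun K : Set R => K.Nonempty), K.Nonempty :=
    fun K hK => (Finset.mem_filter.mp hK).2
  have hrho_univ : (rho (Set.univ : Set R) : ℝ) = Fintype.card R - 1 := by
    rw [rho_eq_ncard_sub_one Set.univ_nonempty, Set.ncard_univ, Nat.card_eq_fintype_card]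
  ext x
  simp only [Set.mem_ofPred_eq]
  rw [sum_mul_rho_eq h𝒦, hrho_univ]
  refine and_congr_right fun _ => and_congr_left fun hx => ⟨fun hpart S _ => ?_, fun hsub π => ?_⟩
  · have h := (nparts_sub_one_le_sum_mul_rc_iff h𝒦 hx (merge ⊥ S)).1 (hpart _)
    rwa [sum_classOf_merge_bot fun _ => weightedRank_eq_zero_of_subsingleton _ x,
      sum_classOf_merge_bot (g := fun T => (rho T : ℝ))
        fun _ hT => by rw [rho_eq_zero_of_subsingleton hT, Nat.cast_zero]] at h
  · refine (nparts_sub_one_le_sum_mul_rc_iff h𝒦 hx π).2 (Finset.sum_le_sum fun c _ => ?_)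
    by_cases hc : classOf π c = Set.univ
    · simp only [hc, weightedRank, Set.inter_univ, hrho_univ]
      rw [sum_mul_rho_eq h𝒦, hx]
    · exact hsub _ hc
end

section
/- Let z be a feasible solution to the LP max Σ_U z_U subject to z ≥ 0 indexed over valid subsets U of R (nonempty, not containing a fixed root r) and Σ_{U : K∩U ≠ ∅, i ∉ U} z_U ≤ C_K for all hyperedges K and all i ∈ K, where C is a nonnegative cost function. Then there exists an optimal solution whose support is a laminar family (any two support sets are nested or disjoint). -/
open Classical

namespace SteinerDual

variable {R : Type*} [Fintype R]

/-- Feasibility for the dual LP: `z ≥ 0`, `z` supported on valid sets (nonempty, avoiding the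
root), and `Σ_{U : K ∩ U ≠ ∅, i ∉ U} z_U ≤ C_K` for every hyperedge `K ∈ 𝒦` and every `i ∈ K`. -/
def Feasible (root : R) (𝒦 : Finset (Set R)) (C : Set R → ℝ) (z : Set R → ℝ) : Prop :=
  (∀ U : Set R, 0 ≤ z U) ∧
  (∀ U : Set R, z U ≠ 0 → U.Nonempty ∧ root ∉ U) ∧
  (∀ K ∈ 𝒦, ∀ i ∈ K,
    ∑ U ∈ Finset.univ.filter (fun U : Set R => (K ∩ U).Nonempty ∧ i ∉ U), z U ≤ C K)

/-- The objective `Σ_U z_U` of the dual LP. -/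
noncomputable def obj (z : Set R → ℝ) : ℝ := ∑ U : Set R, z U

end SteinerDual


/-!
Among the optimal solutions (a compact face of the feasible polytope) pick one maximising the
potential `Σ_W z_W |W|²`. If two support sets `U`, `V` cross, move `ε = min z_U z_V` from `U` and
`V` to `U ∪ V` and `U ∩ V`. The objective is unchanged, and no cut constraint gets worse because
the indicator of "meets `K` and avoids `i`" is submodular on the pair; but the potential strictly
increases, since `|U ∪ V| + |U ∩ V| = |U| + |V|` while `|U ∪ V|` exceeds both `|U|` and `|V|`.
-/

theorem IsCompact.exists_isMaxOn_lex {X β γ : Type*} [TopologicalSpace X]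
    [LinearOrder β] [TopologicalSpace β] [OrderClosedTopology β]
    [LinearOrder γ] [TopologicalSpace γ] [OrderClosedTopology γ]
    {S : Set X} (hS : IsCompact S) (hne : S.Nonempty) {f : X → β} {g : X → γ}
    (hf : Continuous f) (hg : Continuous g) :
    ∃ x ∈ S, IsMaxOn f S x ∧ ∀ y ∈ S, f y = f x → g y ≤ g x := by
  obtain ⟨x₀, hx₀, hfmax⟩ := hS.exists_isMaxOn hne hf.continuousOn
  obtain ⟨x, ⟨hx, hfx : f x = f x₀⟩, hgmax⟩ :=
    (hS.inter_right (isClosed_eq hf continuous_const)).exists_isMaxOn ⟨x₀, hx₀, rfl⟩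
      hg.continuousOn
  refine ⟨x, hx, fun y hy => ?_, fun y hy hfy => hgmax ⟨hy, hfy.trans hfx⟩⟩
  show f y ≤ f x
  exact hfx ▸ hfmax hy

theorem sq_add_sq_lt_sq_add_sq {α : Type*} [CommRing α] [LinearOrder α] [IsStrictOrderedRing α]
    {a b c d : α} (h : a + b = c + d) (ha : a < c) (hb : b < c) :
    a ^ 2 + b ^ 2 < c ^ 2 + d ^ 2 := by
  obtain rfl : d = a + b - c := by rw [h]; ring
  nlinarith [mul_pos (sub_pos.mpr ha) (sub_pos.mpr hb)]

theorem Set.ncard_sq_add_ncard_sq_lt {α : Type*} [Finite α] {U V : Set α} (hUV : ¬U ⊆ V)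
    (hVU : ¬V ⊆ U) :
    (U.ncard : ℝ) ^ 2 + (V.ncard : ℝ) ^ 2 < ((U ∪ V).ncard : ℝ) ^ 2 + ((U ∩ V).ncard : ℝ) ^ 2 := by
  have hsum := Set.ncard_union_add_ncard_inter U V
  have hU := Set.ncard_lt_ncard (Set.ssubset_union_left_iff.2 hVU)
  have hV := Set.ncard_lt_ncard (Set.ssubset_union_right_iff.2 hUV)
  apply sq_add_sq_lt_sq_add_sq <;> exact_mod_cast (by omega)

namespace SteinerDual

section Uncrossing

variable {α : Type*}

noncomputable def cutIndicator (K : Set α) (i : α) (W : Set α) : ℝ :=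
  if (K ∩ W).Nonempty ∧ i ∉ W then 1 else 0

lemma cutIndicator_union_add_inter_le (K : Set α) (i : α) (U V : Set α) :
    cutIndicator K i (U ∪ V) + cutIndicator K i (U ∩ V) ≤
      cutIndicator K i U + cutIndicator K i V := by
  unfold cutIndicator
  split_ifs <;> simp_all [Set.Nonempty] <;> grind

noncomputable def uncross (z : Set α → ℝ) (U V : Set α) (ε : ℝ) : Set α → ℝ :=
  z + ε • (Pi.single (U ∪ V) 1 + Pi.single (U ∩ V) 1 - Pi.single U 1 - Pi.single V 1)

variable (z : Set α → ℝ) (U V : Set α) (ε : ℝ)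

lemma sum_uncross_mul [Fintype α] (f : Set α → ℝ) :
    ∑ W, uncross z U V ε W * f W =
      ∑ W, z W * f W + ε * (f (U ∪ V) + f (U ∩ V) - f U - f V) := by
  simp [uncross, Pi.single_apply, add_mul, sub_mul, mul_add, mul_sub, Finset.sum_add_distrib,
    Finset.sum_sub_distrib]

lemma uncross_apply_of_ne {W : Set α} (h₁ : W ≠ U ∪ V) (h₂ : W ≠ U ∩ V) (h₃ : W ≠ U)
    (h₄ : W ≠ V) : uncross z U V ε W = z W := by
  simp [uncross, h₁, h₂, h₃, h₄]

lemma uncross_nonneg (hz : ∀ W, 0 ≤ z W) (hUV : U ≠ V) (hε : 0 ≤ ε) (hεU : ε ≤ z U)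
    (hεV : ε ≤ z V) (W : Set α) : 0 ≤ uncross z U V ε W := by
  have hsingle (A : Set α) : 0 ≤ (Pi.single A 1 : Set α → ℝ) W :=
    (Pi.single_nonneg.2 zero_le_one : (0 : Set α → ℝ) ≤ Pi.single A 1) W
  have hremoved :
      0 ≤ z W - ε * (Pi.single U 1 : Set α → ℝ) W - ε * (Pi.single V 1 : Set α → ℝ) W := by
    by_cases hWU : W = U
    · subst hWU; simp [hUV, hεU]
    by_cases hWV : W = V
    · subst hWV; simp [hWU, hεV]
    simp [hWU, hWV, hz W]
  simp only [uncross, Pi.add_apply, Pi.smul_apply, Pi.sub_apply, smul_eq_mul]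
  nlinarith [mul_nonneg hε (hsingle (U ∪ V)), mul_nonneg hε (hsingle (U ∩ V))]

end Uncrossing

variable {R : Type*} [Fintype R]

lemma sum_filter_eq_sum_mul_cutIndicator (z : Set R → ℝ) (K : Set R) (i : R) :
    ∑ W ∈ Finset.univ.filter (fun W : Set R => (K ∩ W).Nonempty ∧ i ∉ W), z W =
      ∑ W, z W * cutIndicator K i W := by
  simp [Finset.sum_filter, cutIndicator]

lemma obj_uncross (z : Set R → ℝ) (U V : Set R) (ε : ℝ) : obj (uncross z U V ε) = obj z := by
  simpa [obj] using sum_uncross_mul z U V ε 1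

lemma Feasible.uncross {root : R} {𝒦 : Finset (Set R)} {C : Set R → ℝ} {z : Set R → ℝ}
    (hz : Feasible root 𝒦 C z) {U V : Set R} (hU : z U ≠ 0) (hV : z V ≠ 0) (hUV : U ≠ V)
    (hmeet : (U ∩ V).Nonempty) {ε : ℝ} (hε : 0 ≤ ε) (hεU : ε ≤ z U) (hεV : ε ≤ z V) :
    Feasible root 𝒦 C (uncross z U V ε) := by
  obtain ⟨hpos, hsupp, hcons⟩ := hz
  refine ⟨uncross_nonneg z U V ε hpos hUV hε hεU hεV, fun W hW => ?_, fun K hK i hi => ?_⟩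
  · obtain ⟨hUne, hUr⟩ := hsupp U hU
    obtain ⟨hVne, hVr⟩ := hsupp V hV
    by_cases h₁ : W = U ∪ V
    · exact h₁ ▸ ⟨hUne.mono Set.subset_union_left, by simp [hUr, hVr]⟩
    by_cases h₂ : W = U ∩ V
    · exact h₂ ▸ ⟨hmeet, fun h => hUr h.1⟩
    by_cases h₃ : W = U
    · exact h₃ ▸ ⟨hUne, hUr⟩
    by_cases h₄ : W = V
    · exact h₄ ▸ ⟨hVne, hVr⟩
    exact hsupp W (uncross_apply_of_ne z U V ε h₁ h₂ h₃ h₄ ▸ hW)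
  · have hzK := hcons K hK i hi
    have hcut := cutIndicator_union_add_inter_le K i U V
    rw [sum_filter_eq_sum_mul_cutIndicator] at hzK ⊢
    rw [sum_uncross_mul]
    nlinarith

lemma isClosed_setOf_feasible (root : R) (𝒦 : Finset (Set R)) (C : Set R → ℝ) :
    IsClosed {w | Feasible root 𝒦 C w} := by
  simp only [Feasible, Set.ofPred_and, Set.ofPred_forall]
  refine .inter (isClosed_iInter fun U => isClosed_le continuous_const (continuous_apply U))
    (.inter (isClosed_iInter fun U => isClosed_imp
      (isOpen_ne_fun (continuous_apply U) continuous_const) isClosed_const) ?_)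
  exact isClosed_iInter fun K => isClosed_iInter fun _ => isClosed_iInter fun i =>
    isClosed_iInter fun _ =>
      isClosed_le (continuous_finsetSum _ fun U _ => continuous_apply U) continuous_const

lemma isCompact_setOf_feasible {root : R} {𝒦 : Finset (Set R)} {C : Set R → ℝ} {B : ℝ}
    (hB : ∀ w, Feasible root 𝒦 C w → obj w ≤ B) : IsCompact {w | Feasible root 𝒦 C w} :=
  (isCompact_univ_pi fun _ => isCompact_Icc).of_isClosed_subset
    (isClosed_setOf_feasible root 𝒦 C) fun w hw W _ =>
      ⟨hw.1 W, (Finset.single_le_sum (fun U _ => hw.1 U) (Finset.mem_univ W)).trans (hB w hw)⟩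

lemma continuous_obj : Continuous (obj : (Set R → ℝ) → ℝ) :=
  continuous_finsetSum _ fun U _ => continuous_apply U

noncomputable def potential (z : Set R → ℝ) : ℝ := ∑ W, z W * (W.ncard : ℝ) ^ 2

lemma continuous_potential : Continuous (potential : (Set R → ℝ) → ℝ) :=
  continuous_finsetSum _ fun W _ => (continuous_apply W).mul continuous_const

lemma potential_lt_potential_uncross (z : Set R → ℝ) {U V : Set R} (hUV : ¬U ⊆ V)
    (hVU : ¬V ⊆ U) {ε : ℝ} (hε : 0 < ε) : potential z < potential (uncross z U V ε) := by
  have := Set.ncard_sq_add_ncard_sq_lt hUV hVU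
  rw [potential, potential, sum_uncross_mul]
  nlinarith

end SteinerDual

open SteinerDual in
theorem exists_laminar_optimal_dual_general {R : Type*} [Fintype R] (root : R)
    (𝒦 : Finset (Set R)) (C : Set R → ℝ)
    (z : Set R → ℝ) (hz : Feasible root 𝒦 C z)
    (hbdd : ∃ B : ℝ, ∀ w : Set R → ℝ, Feasible root 𝒦 C w → obj w ≤ B) :
    ∃ z' : Set R → ℝ, Feasible root 𝒦 C z' ∧
      (∀ w : Set R → ℝ, Feasible root 𝒦 C w → obj w ≤ obj z') ∧
      (∀ U V : Set R, z' U ≠ 0 → z' V ≠ 0 → U ⊆ V ∨ V ⊆ U ∨ U ∩ V = ∅) := by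
  obtain ⟨B, hB⟩ := hbdd
  obtain ⟨z', hz', hopt, hmax⟩ := (isCompact_setOf_feasible hB).exists_isMaxOn_lex
    ⟨z, hz⟩ continuous_obj continuous_potential
  refine ⟨z', hz', fun w hw => hopt hw, fun U V hU hV => ?_⟩
  by_contra! ⟨hUV, hVU, hmeet⟩
  set ε := min (z' U) (z' V)
  have hε : 0 < ε := lt_min ((hz'.1 U).lt_of_ne' hU) ((hz'.1 V).lt_of_ne' hV)
  have hfeas : Feasible root 𝒦 C (uncross z' U V ε) :=
    hz'.uncross hU hV (fun h => hUV h.subset) hmeet hε.le (min_le_left _ _) (min_le_right _ _)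
  exact (hmax _ hfeas (obj_uncross z' U V ε)).not_gt
    (potential_lt_potential_uncross z' hUV hVU hε)

open SteinerDual in
/-- if the dual LP is feasible and bounded, it has an optimal solution whose
support is a laminar family. -/
theorem exists_laminar_optimal_dual {R : Type*} [Fintype R] (root : R)
    (𝒦 : Finset (Set R)) (C : Set R → ℝ) (hC : ∀ K ∈ 𝒦, 0 ≤ C K)
    (z : Set R → ℝ) (hz : Feasible root 𝒦 C z)
    (hbdd : ∃ B : ℝ, ∀ w : Set R → ℝ, Feasible root 𝒦 C w → obj w ≤ B) :
    ∃ z' : Set R → ℝ, Feasible root 𝒦 C z' ∧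
      (∀ w : Set R → ℝ, Feasible root 𝒦 C w → obj w ≤ obj z') ∧
      (∀ U V : Set R, z' U ≠ 0 → z' V ≠ 0 → U ⊆ V ∨ V ⊆ U ∨ U ∩ V = ∅) :=
  exists_laminar_optimal_dual_general root 𝒦 C z hz hbdd
end

section
/- Let 𝒰 be a laminar family of subsets of a finite ground set. Let M be the constraint matrix of the system λ_U - Σ_{u∈U}(α_u + β_u) ≥ -1 for each U ∈ 𝒰 and Σ_u β_u = 1, restricted to the columns (α_u) and (β_u) for u in the ground set; that is, M has one row per set U ∈ 𝒰, with entry -1 in columns α_u and β_u for each u ∈ U, plus one extra row with entry 1 in each column β_u. Then M is totally unimodular. -/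
open Classical

namespace SteinerTU

variable {X : Type*}

/-- The constraint matrix of the system `λ_U - Σ_{u ∈ U} (α_u + β_u) ≥ -1` (one row per set `U`
of the laminar family) and `Σ_u β_u = 1` (the extra row), restricted to the `α, β` columns:
row `U` has entry `-1` in columns `α_u` and `β_u` for `u ∈ U` (and `0` elsewhere), while the
extra row is `0` on `α`-columns and `1` on `β`-columns. -/
noncomputable def liftingMatrix (𝒰 : Finset (Set X)) :
    Matrix (Option {U : Set X // U ∈ 𝒰}) (X ⊕ X) ℚ :=
  fun row col =>
    match row, col with
    | some U, Sum.inl u => if u ∈ U.1 then -1 else 0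
    | some U, Sum.inr u => if u ∈ U.1 then -1 else 0
    | none, Sum.inl _ => 0
    | none, Sum.inr _ => 1

end SteinerTU

private lemma rs_zero : (0 : ℚ) ∈ Set.range (SignType.cast : SignType → ℚ) := ⟨0, rfl⟩
private lemma rs_one : (1 : ℚ) ∈ Set.range (SignType.cast : SignType → ℚ) := ⟨1, rfl⟩
private lemma rs_neg_one : (-1 : ℚ) ∈ Set.range (SignType.cast : SignType → ℚ) := ⟨-1, by simp⟩

private lemma rs_mul {a b : ℚ} (ha : a ∈ Set.range (SignType.cast : SignType → ℚ))
    (hb : b ∈ Set.range (SignType.cast : SignType → ℚ)) :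
    a * b ∈ Set.range (SignType.cast : SignType → ℚ) := by
  obtain ⟨s, rfl⟩ := ha
  obtain ⟨t, rfl⟩ := hb
  exact ⟨s * t, by push_cast; ring⟩

private lemma rs_neg {a : ℚ} (ha : a ∈ Set.range (SignType.cast : SignType → ℚ)) :
    -a ∈ Set.range (SignType.cast : SignType → ℚ) := by
  have := rs_mul rs_neg_one ha
  simpa using this

/-- Row operations: subtracting row `i₀` from each row in `s` preserves the determinant. -/
private lemma det_sub_rows {n : ℕ} (A : Matrix (Fin n) (Fin n) ℚ) (i₀ : Fin n)
    (s : Finset (Fin n)) :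
    i₀ ∉ s →
    (Matrix.of fun j c => if j ∈ s then A j c - A i₀ c else A j c).det = A.det := by
  induction s using Finset.induction_on with
  | empty =>
    intro _
    have : (Matrix.of fun j c => if j ∈ (∅ : Finset (Fin n)) then A j c - A i₀ c else A j c) = A := by
      ext j c; simp
    rw [this]
  | @insert a s' ha ih =>
    intro h
    have hi₀a : i₀ ≠ a := fun hh => h (by simp [hh])
    have hi₀s : i₀ ∉ s' := fun hh => h (Finset.mem_insert_of_mem hh)
    set B : Matrix (Fin n) (Fin n) ℚ :=
      Matrix.of fun j c => if j ∈ s' then A j c - A i₀ c else A j c with hB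
    have key : (Matrix.of fun j c => if j ∈ insert a s' then A j c - A i₀ c else A j c)
        = B.updateRow a (B a + (-1 : ℚ) • B i₀) := by
      ext j c
      by_cases hja : j = a
      · subst hja
        simp [Matrix.updateRow_self, hB, ha, hi₀s, Finset.mem_insert, sub_eq_add_neg]
      · simp [Matrix.updateRow_ne hja, hB, Finset.mem_insert, hja]
    rw [key, Matrix.det_updateRow_add_smul_self B (Ne.symm hi₀a) (-1 : ℚ)]
    exact ih hi₀s

/-- Key lemma: a square 0/1 matrix whose rows are characteristic vectors of a family of sets
that is laminar except for at most one "free" row has determinant in `{0, ±1}`. -/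
private lemma laminar_det (k : ℕ) :
    ∀ (S : Fin k → Finset (Fin k)) (free : Fin k → Prop),
      (∀ i j, free i → free j → i = j) →
      (∀ i j, ¬free i → ¬free j →
        S i ⊆ S j ∨ S j ⊆ S i ∨ Disjoint (S i) (S j)) →
      ∀ A : Matrix (Fin k) (Fin k) ℚ,
        (∀ i j, A i j = if j ∈ S i then 1 else 0) →
        A.det ∈ Set.range (SignType.cast : SignType → ℚ) := by
  induction k with
  | zero =>
    intro S free _ _ A _
    rw [Matrix.det_fin_zero]
    exact rs_one
  | succ k IH =>
    intro S free hf hl A hA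
    by_cases h1 : ∃ i, ¬free i ∧ S i = ∅
    · obtain ⟨i, _, hSi⟩ := h1
      have : A.det = 0 :=
        Matrix.det_eq_zero_of_row_eq_zero i (fun j => by simp [hA, hSi])
      rw [this]; exact rs_zero
    by_cases h2 : ∃ i j, i ≠ j ∧ ¬free i ∧ ¬free j ∧ S i = S j
    · obtain ⟨i, j, hij, _, _, hS⟩ := h2
      have : A.det = 0 :=
        Matrix.det_zero_of_row_eq hij (funext fun c => by simp [hA, hS])
      rw [this]; exact rs_zero
    by_cases hall : ∀ i, free i
    · have hk : k = 0 := by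
        have h0 := hf 0 (Fin.last k) (hall _) (hall _)
        have := (Fin.ext_iff.mp h0)
        simpa [Fin.last] using this.symm
      subst hk
      rw [Matrix.det_fin_one, hA]
      split
      · exact rs_one
      · exact rs_zero
    push_neg at hall h1 h2
    obtain ⟨iw, hiw⟩ := hall
    obtain ⟨i₀, hi₀mem, hi₀min⟩ :=
      Finset.exists_min_image (Finset.univ.filter fun i => ¬ free i)
        (fun i => (S i).card) ⟨iw, by simpa using hiw⟩
    have hi₀ : ¬ free i₀ := (Finset.mem_filter.mp hi₀mem).2
    -- (∗) every other non-free set contains S i₀ or is disjoint from it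
    have hstar : ∀ j, j ≠ i₀ → ¬free j → S i₀ ⊆ S j ∨ Disjoint (S i₀) (S j) := by
      intro j hj hfj
      rcases hl i₀ j hi₀ hfj with h | h | h
      · exact Or.inl h
      · have hcard : (S i₀).card ≤ (S j).card := hi₀min j (by simpa using hfj)
        have heq : S j = S i₀ := Finset.eq_of_subset_of_card_le h hcard
        exact absurd heq.symm (h2 i₀ j (Ne.symm hj) hi₀ hfj)
      · exact Or.inr h
    -- choose a good column c₀
    have hc : ∃ c₀ ∈ S i₀, ∀ j, j ≠ i₀ → c₀ ∈ S j → S i₀ ⊆ S j := by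
      have hSne : S i₀ ≠ ∅ := Finset.nonempty_iff_ne_empty.mp (h1 i₀ hi₀)
      have hkey : ∀ c, c ∈ S i₀ → ∀ j, j ≠ i₀ → ¬free j → c ∈ S j → S i₀ ⊆ S j := by
        intro c hc j hj hfj hcj
        rcases hstar j hj hfj with h | h
        · exact h
        · exact absurd hcj (Finset.disjoint_left.mp h hc)
      by_cases hfree : ∃ c ∈ S i₀, ∀ j, free j → c ∉ S j
      · obtain ⟨c, hcmem, hcf⟩ := hfree
        refine ⟨c, hcmem, fun j hj hcj => ?_⟩
        by_cases hfj : free j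
        · exact absurd hcj (hcf j hfj)
        · exact hkey c hcmem j hj hfj hcj
      · push_neg at hfree
        obtain ⟨c, hcmem⟩ := Finset.nonempty_iff_ne_empty.mpr hSne
        obtain ⟨j₁, hj₁f, _⟩ := hfree c hcmem
        have hsub : S i₀ ⊆ S j₁ := by
          intro c' hc'
          obtain ⟨j, hjf, hj⟩ := hfree c' hc'
          rwa [hf j j₁ hjf hj₁f] at hj
        refine ⟨c, hcmem, fun j hj hcj => ?_⟩
        by_cases hfj : free j
        · rw [hf j j₁ hfj hj₁f]; exact hsub
        · exact hkey c hcmem j hj hfj hcj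
    obtain ⟨c₀, hc₀mem, hc₀key⟩ := hc
    -- the row-reduced matrix
    set s : Finset (Fin (k+1)) := Finset.univ.filter (fun j => j ≠ i₀ ∧ c₀ ∈ S j) with hs
    have hi₀s : i₀ ∉ s := by simp [hs]
    set A' : Matrix (Fin (k+1)) (Fin (k+1)) ℚ :=
      Matrix.of (fun j c => if j ∈ s then A j c - A i₀ c else A j c) with hA'def
    have hdet : A'.det = A.det := det_sub_rows A i₀ s hi₀s
    -- new sets
    set T : Fin (k+1) → Finset (Fin (k+1)) :=
      fun j => if j ≠ i₀ ∧ c₀ ∈ S j then S j \ S i₀ else S j with hT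
    have hA' : ∀ j c, A' j c = if c ∈ T j then 1 else 0 := by
      intro j c
      by_cases hj : j ≠ i₀ ∧ c₀ ∈ S j
      · have hsub : S i₀ ⊆ S j := hc₀key j hj.1 hj.2
        have hjs : j ∈ s := by simp [hs, hj.1, hj.2]
        simp only [hA'def, Matrix.of_apply, if_pos hjs, hA, hT, if_pos hj,
          Finset.mem_sdiff]
        by_cases h1' : c ∈ S j
        · by_cases h2' : c ∈ S i₀ <;> simp [h1', h2']
        · have h2' : c ∉ S i₀ := fun hh => h1' (hsub hh)
          simp [h1', h2']
      · have hjs : j ∉ s := by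
          simp only [hs, Finset.mem_filter, Finset.mem_univ, true_and]
          exact hj
        simp only [hA'def, Matrix.of_apply, if_neg hjs, hA, hT, if_neg hj]
    -- nonfree rows other than i₀ are exactly S j \ S i₀
    have hTnf : ∀ j, j ≠ i₀ → ¬free j → T j = S j \ S i₀ := by
      intro j hj hfj
      by_cases hcj : c₀ ∈ S j
      · simp [hT, hj, hcj]
      · have hdisj : Disjoint (S i₀) (S j) := by
          rcases hstar j hj hfj with h | h
          · exact absurd (h hc₀mem) hcj
          · exact h
        have : S j \ S i₀ = S j := Finset.sdiff_eq_self_of_disjoint hdisj.symm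
        simp [hT, hj, hcj, this]
    -- column c₀ of A' is the i₀ basis vector
    have hcol : ∀ j, A' j c₀ = if j = i₀ then 1 else 0 := by
      intro j
      rw [hA' j c₀]
      by_cases hj : j = i₀
      · subst hj
        simp [hT, hc₀mem]
      · by_cases hcj : c₀ ∈ S j
        · simp [hT, hj, hcj, Finset.mem_sdiff, hc₀mem]
        · simp [hT, hj, hcj]
    -- Laplace expansion along column c₀
    have hexp : A'.det =
        (-1 : ℚ) ^ ((i₀ : ℕ) + (c₀ : ℕ)) *
          (A'.submatrix i₀.succAbove c₀.succAbove).det := by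
      rw [Matrix.det_succ_column A' c₀]
      rw [Finset.sum_eq_single i₀]
      · rw [hcol i₀, if_pos rfl, mul_one]
      · intro b _ hb
        rw [hcol b, if_neg hb, mul_zero, zero_mul]
      · intro h; exact absurd (Finset.mem_univ i₀) h
    -- apply the induction hypothesis to the minor
    have hminor : (A'.submatrix i₀.succAbove c₀.succAbove).det ∈
        Set.range (SignType.cast : SignType → ℚ) := by
      refine IH (fun j => Finset.univ.filter fun c => c₀.succAbove c ∈ T (i₀.succAbove j))
        (fun j => free (i₀.succAbove j)) ?_ ?_ _ ?_
      · intro i j hfi hfj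
        exact Fin.succAbove_right_injective (hf _ _ hfi hfj)
      · intro i j hfi hfj
        have hi' : i₀.succAbove i ≠ i₀ := Fin.succAbove_ne i₀ i
        have hj' : i₀.succAbove j ≠ i₀ := Fin.succAbove_ne i₀ j
        have hmem : ∀ (r : Fin (k+1)), r ≠ i₀ → ¬ free r → ∀ c : Fin k,
            (c₀.succAbove c ∈ T r) ↔ (c₀.succAbove c ∈ S r ∧ c₀.succAbove c ∉ S i₀) := by
          intro r hr hfr c
          rw [hTnf r hr hfr, Finset.mem_sdiff]
        rcases hl (i₀.succAbove i) (i₀.succAbove j) hfi hfj with h | h | h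
        · left
          intro c hc
          simp only [Finset.mem_filter, Finset.mem_univ, true_and] at hc ⊢
          rw [hmem _ hi' hfi] at hc
          rw [hmem _ hj' hfj]
          exact ⟨h hc.1, hc.2⟩
        · right; left
          intro c hc
          simp only [Finset.mem_filter, Finset.mem_univ, true_and] at hc ⊢
          rw [hmem _ hj' hfj] at hc
          rw [hmem _ hi' hfi]
          exact ⟨h hc.1, hc.2⟩
        · right; right
          rw [Finset.disjoint_left]
          intro c hc hc'
          simp only [Finset.mem_filter, Finset.mem_univ, true_and] at hc hc'
          rw [hmem _ hi' hfi] at hc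
          rw [hmem _ hj' hfj] at hc'
          exact Finset.disjoint_left.mp h hc.1 hc'.1
      · intro i j
        rw [Matrix.submatrix_apply, hA']
        simp
    rw [← hdet, hexp]
    rcases Nat.even_or_odd ((i₀ : ℕ) + (c₀ : ℕ)) with hpar | hpar
    · rw [hpar.neg_one_pow, one_mul]; exact hminor
    · rw [hpar.neg_one_pow, neg_one_mul]; exact rs_neg hminor

open SteinerTU in
/-- for a laminar family `𝒰`, the constraint matrix of the lifting system is
totally unimodular. -/
theorem liftingMatrix_isTotallyUnimodular {X : Type*} [Fintype X] (𝒰 : Finset (Set X))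
    (hlam : ∀ U ∈ 𝒰, ∀ V ∈ 𝒰, U ⊆ V ∨ V ⊆ U ∨ U ∩ V = ∅) :
    (liftingMatrix 𝒰).IsTotallyUnimodular := by
  intro k f g hf _hg
  classical
  -- the underlying element of a column
  set π : X ⊕ X → X := Sum.elim id id with hπ
  -- the support sets of the rows
  set S : Fin k → Finset (Fin k) := fun i =>
    Finset.univ.filter (fun j =>
      match f i with
      | some U => π (g j) ∈ U.1
      | none => (g j).isRight) with hS
  set ε : Fin k → ℚ := fun i => if f i = none then 1 else -1 with hε
  set B : Matrix (Fin k) (Fin k) ℚ :=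
    Matrix.of fun i j => if j ∈ S i then (1 : ℚ) else 0 with hB
  have hMB : (liftingMatrix 𝒰).submatrix f g = Matrix.of fun i j => ε i * B i j := by
    ext i j
    rcases hfi : f i with _ | U <;> rcases hgj : g j with u | u <;>
      simp only [Matrix.submatrix_apply, Matrix.of_apply, hfi, hgj, liftingMatrix, hε, hB,
        hS, hπ, Finset.mem_filter, Finset.mem_univ, true_and, Sum.elim_inl, Sum.elim_inr,
        Sum.isRight_inl, Sum.isRight_inr, id_eq] <;>
      split <;> simp_all
  rw [hMB, Matrix.det_mul_column ε B]
  refine rs_mul ?_ ?_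
  · refine Finset.prod_induction ε (· ∈ Set.range (SignType.cast : SignType → ℚ))
      (fun _ _ => rs_mul) rs_one (fun i _ => ?_)
    by_cases h : f i = none
    · simpa [hε, h] using rs_one
    · simpa [hε, h] using rs_neg_one
  · refine laminar_det k S (fun i => f i = none) ?_ ?_ B ?_
    · intro i j hi hj
      exact hf (hi.trans hj.symm)
    · intro i j hi hj
      obtain ⟨U, hU⟩ := Option.ne_none_iff_exists'.mp hi
      obtain ⟨V, hV⟩ := Option.ne_none_iff_exists'.mp hj
      rcases hlam U.1 U.2 V.1 V.2 with h | h | h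
      · left
        intro c hc
        simp only [hS, Finset.mem_filter, Finset.mem_univ, true_and, hU, hV] at *
        exact h hc
      · right; left
        intro c hc
        simp only [hS, Finset.mem_filter, Finset.mem_univ, true_and, hU, hV] at *
        exact h hc
      · right; right
        rw [Finset.disjoint_left]
        intro c hc hc'
        simp only [hS, Finset.mem_filter, Finset.mem_univ, true_and, hU, hV] at hc hc'
        exact Set.eq_empty_iff_forall_notMem.mp h (π (g c)) ⟨hc, hc'⟩
    · intro i j
      simp [hB]
end

section
/- For every integer k ≥ 2, (k - 1 + H(k-1))/k ≤ 73/60, where H(n) = Σ_{i=1}^n 1/i is the n-th harmonic number; moreover equality holds at k = 5. -/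
lemma harm_bound : ∀ n : ℕ, 4 ≤ n → harmonic n ≤ 25/12 + ((n : ℚ) - 4)/5 := by
  intro n hn
  induction n, hn using Nat.le_induction with
  | base => norm_num [harmonic, Finset.sum_range_succ]
  | succ n hn ih =>
      rw [harmonic_succ]
      have h1 : (1 : ℚ)/(n+1) ≤ 1/5 := by
        apply one_div_le_one_div_of_le <;> [norm_num; exact_mod_cast by omega]
      push_cast
      calc harmonic n + ((n:ℚ)+1)⁻¹ ≤ (25/12 + ((n:ℚ) - 4)/5) + 1/5 := add_le_add ih (by rw [inv_eq_one_div]; exact h1)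
        _ = 25/12 + ((n:ℚ) + 1 - 4)/5 := by ring

/-- for every integer `k ≥ 2`, `(k - 1 + H(k-1))/k ≤ 73/60`, where `H` is the
harmonic series; moreover equality holds at `k = 5`. -/
theorem harmonic_ratio_le_73_div_60 :
    (∀ k : ℕ, 2 ≤ k → ((k : ℚ) - 1 + harmonic (k - 1)) / k ≤ 73 / 60) ∧
    ((5 : ℚ) - 1 + harmonic 4) / 5 = 73 / 60 := by
  constructor
  · intro k hk
    rcases le_or_gt k 5 with h5 | h5
    · interval_cases k <;> norm_num [harmonic, Finset.sum_range_succ]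
    · have hk1 : 4 ≤ k - 1 := by omega
      have hb := harm_bound (k - 1) hk1
      have hc : ((k - 1 : ℕ) : ℚ) = (k : ℚ) - 1 := by
        have : 1 ≤ k := by omega
        push_cast [this]; ring
      rw [hc] at hb
      have hkpos : (0 : ℚ) < k := by positivity
      rw [div_le_div_iff₀ hkpos (by norm_num)]
      have h6 : (6 : ℚ) ≤ k := by exact_mod_cast by omega
      nlinarith [hb]
  · norm_num [harmonic, Finset.sum_range_succ]
end

section
/- Let π be a partition of R with parts π₁,...,π_t where |π_i ∩ π'_j| ≤ 1 for every part π'_j of another partition π' (i.e., π ∧ π' is the all-singletons partition). Then for any nonempty K ⊆ R and any part π_i of π: rc_K^{π'} − rc_K^{m(π', π_i)} ≥ ρ(π_i ∩ K), where ρ(X) = max(0,|X|−1) and m(π', π_i) merges all parts of π' intersecting π_i. -/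
open Classical

/-! Distinct points of `P ∩ K` lie in distinct parts of `π'`, because `π ⊓ π'` is discrete, so `K`
meets at least `|P ∩ K|` parts of `π'` that also meet `P`. Merging collapses these into a single
part, so the number of parts met by `K` drops by at least `|P ∩ K| - 1`. -/

namespace Set

theorem ncard_image_add_ncard_inter_le {α β : Type*} {f : α → β} {s t : Set α}
    (hs : s.Finite) (hf : (f '' t).Subsingleton) :
    (f '' s).ncard + (s ∩ t).ncard ≤ s.ncard + 1 := by
  have hcollapse : (f '' (s ∩ t)).ncard ≤ 1 :=
    (ncard_le_one (hs.inter_of_left t |>.image f)).2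
      fun _ ha _ hb => hf.anti (image_mono inter_subset_right) ha hb
  calc (f '' s).ncard + (s ∩ t).ncard
      ≤ (f '' (s \ t)).ncard + (f '' (s ∩ t)).ncard + (s ∩ t).ncard := by
        rw [← sdiff_union_inter s t, image_union, sdiff_union_inter]
        gcongr
        exact ncard_union_le _ _
    _ ≤ (s \ t).ncard + 1 + (s ∩ t).ncard := by
        gcongr
        exact ncard_image_le hs.sdiff
    _ = s.ncard + 1 := by
        rw [← ncard_inter_add_ncard_sdiff_eq_ncard s t hs]
        ring

end Set

namespace SteinerLP

open Set

variable {R : Type*}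

theorem image_mk_merge (s : Setoid R) (S K : Set R) :
    Quotient.mk (merge s S) '' K = Setoid.map_of_le (le_merge s S) '' (Quotient.mk s '' K) := by
  rw [image_image]
  rfl

theorem subsingleton_map_of_le_merge_image (s : Setoid R) (S : Set R) :
    (Setoid.map_of_le (le_merge s S) '' (Quotient.mk s '' S)).Subsingleton := by
  rintro _ ⟨_, ⟨a, ha, rfl⟩, rfl⟩ _ ⟨_, ⟨b, hb, rfl⟩, rfl⟩
  exact Quotient.sound (Or.inr ⟨⟨a, ha, s.refl a⟩, ⟨b, hb, s.refl b⟩⟩)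

theorem injOn_mk_classOf {π π' : Setoid R} (hmeet : π ⊓ π' = ⊥) (c : Quotient π) :
    InjOn (Quotient.mk π') (classOf π c) := by
  intro x hx y hy hxy
  have hrel : (π ⊓ π') x y := ⟨Quotient.exact (hx.trans hy.symm), Quotient.exact hxy⟩
  rwa [hmeet] at hrel

theorem ncard_inter_add_ncard_image_mk_merge_le [Finite R] {π π' : Setoid R}
    (hmeet : π ⊓ π' = ⊥) (K : Set R) (c : Quotient π) :
    (classOf π c ∩ K).ncard + (Quotient.mk (merge π' (classOf π c)) '' K).ncard ≤
      (Quotient.mk π' '' K).ncard + 1 := by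
  have hparts : (classOf π c ∩ K).ncard ≤
      (Quotient.mk π' '' K ∩ Quotient.mk π' '' classOf π c).ncard := by
    rw [← ((injOn_mk_classOf hmeet c).mono inter_subset_left).ncard_image]
    exact ncard_le_ncard ((image_inter_subset _ _ _).trans_eq (inter_comm _ _))
  have hcount := ncard_image_add_ncard_inter_le (toFinite (Quotient.mk π' '' K))
    (subsingleton_map_of_le_merge_image π' (classOf π c))
  rw [image_mk_merge]
  omega

end SteinerLP

open SteinerLP in
theorem rc_merge_drop_ge_rho_general {R : Type*} [Fintype R]
    (π π' : Setoid R) (hmeet : π ⊓ π' = (⊥ : Setoid R))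
    (K : Set R) (c : Quotient π) :
    (rho (classOf π c ∩ K) : ℤ) ≤ (rc π' K : ℤ) - (rc (merge π' (classOf π c)) K : ℤ) := by
  have hcount := ncard_inter_add_ncard_image_mk_merge_le hmeet K c
  have hmono :
      (Quotient.mk (merge π' (classOf π c)) '' K).ncard ≤ (Quotient.mk π' '' K).ncard := by
    rw [image_mk_merge]
    exact Set.ncard_image_le (Set.toFinite _)
  -- `rc` and `rho` subtract in `ℕ`, so the case `K = ∅` needs separate care
  have hempty : (Quotient.mk (merge π' (classOf π c)) '' K).ncard = 0 →
      (classOf π c ∩ K).ncard = 0 := by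
    intro h
    rw [Set.ncard_eq_zero, Set.image_eq_empty] at h
    simp [h]
  unfold rho rc
  omega

open SteinerLP in
/-- if the common refinement of `π` and `π'` is the all-singletons partition,
then for any nonempty `K ⊆ R` and any part `P` of `π`,
`rc_K^{π'} − rc_K^{m(π', P)} ≥ ρ(P ∩ K)`. -/
theorem rc_merge_drop_ge_rho {R : Type*} [Fintype R]
    (π π' : Setoid R) (hmeet : π ⊓ π' = (⊥ : Setoid R))
    (K : Set R) (hK : K.Nonempty) (c : Quotient π) :
    (rho (classOf π c ∩ K) : ℤ) ≤ (rc π' K : ℤ) - (rc (merge π' (classOf π c)) K : ℤ) :=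
  rc_merge_drop_ge_rho_general π π' hmeet K c
end
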